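/- arXiv:2007.09987 — 9 statements merged into one kernel-verified Lean document; each statement's English description precedes it below -/
import Mathlib

section
/- For any subset E ⊆ ℕ^m, the function ω_E(s) counting the number of points x ∈ ℕ^m with x₁+...+x_m ≤ s such that no e ∈ E satisfies e ≤ x (componentwise) agrees with a numerical polynomial of degree at most m for all sufficiently large s. -/
/-! Dickson's lemma replaces `E` by the finite set of its minimal elements without changing `ω_E`.
For a finite `E` and `e ∈ E`, the points of `V_{E \ {e}}(s)` lying above `e` are the translates by
`e` of `V_{E'}(s - ord e)` with `E' = {f - e : f ∈ E \ {e}}`, so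
`ω_E(s) = ω_{E \ {e}}(s) - ω_{E'}(s - ord e)` for large `s`, and induction on `#E` reduces
everything to `ω_∅(s) = (s + m).choose m`. -/

open Filter Finset Polynomial

/-- The binomial coefficient polynomial C(x, k) = x(x-1)...(x-k+1)/k! over ℚ. -/
noncomputable def qchoose (x : ℚ) (k : ℕ) : ℚ :=
  (∏ i ∈ Finset.range k, (x - i)) / (Nat.factorial k)


/-- ω_E(s): number of points of ℕ^m of order ≤ s not componentwise above any element of E. -/
noncomputable def omegaE {m : ℕ} (E : Set (Fin m → ℕ)) (s : ℕ) : ℕ :=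
  Set.ncard {x : Fin m → ℕ | (∑ i, x i) ≤ s ∧ ∀ e ∈ E, ¬ e ≤ x}

variable {R : Type*}

def EventuallyPoly [CommRing R] (f : ℕ → R) (d : ℕ) : Prop :=
  ∃ p : R[X], p.natDegree ≤ d ∧ ∀ᶠ s : ℕ in atTop, f s = p.eval (s : R)

namespace EventuallyPoly

variable [CommRing R] {f g : ℕ → R} {d : ℕ}

theorem congr (hf : EventuallyPoly f d) (hfg : ∀ᶠ s in atTop, f s = g s) :
    EventuallyPoly g d := by
  obtain ⟨p, hp, hfp⟩ := hf
  refine ⟨p, hp, ?_⟩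
  filter_upwards [hfp, hfg] with s hfs hfgs
  rw [← hfgs, hfs]

theorem sub (hf : EventuallyPoly f d) (hg : EventuallyPoly g d) : EventuallyPoly (f - g) d := by
  obtain ⟨p, hp, hfp⟩ := hf
  obtain ⟨q, hq, hgq⟩ := hg
  refine ⟨p - q, (natDegree_sub_le p q).trans (max_le hp hq), ?_⟩
  filter_upwards [hfp, hgq] with s hfs hgs
  rw [Pi.sub_apply, hfs, hgs, eval_sub]

theorem comp_tsub (hf : EventuallyPoly f d) (a : ℕ) : EventuallyPoly (fun s => f (s - a)) d := by
  obtain ⟨p, hp, hfp⟩ := hf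
  refine ⟨p.comp (X - C (a : R)), natDegree_comp_le.trans
    ((Nat.mul_le_mul hp (natDegree_X_sub_C_le _)).trans_eq (mul_one d)), ?_⟩
  filter_upwards [(tendsto_sub_atTop_nat a).eventually hfp, eventually_ge_atTop a] with s hs has
  rw [hs, eval_comp, eval_sub, eval_X, eval_C, Nat.cast_sub has]

end EventuallyPoly

theorem eventuallyPoly_add_choose [Field R] [CharZero R] (m : ℕ) :
    EventuallyPoly (fun s => ((s + m).choose m : R)) m := by
  refine ⟨C (m.factorial : R)⁻¹ * (descPochhammer R m).comp (X + C (m : R)),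
    (natDegree_C_mul_le _ _).trans ?_, Eventually.of_forall fun s => ?_⟩
  · rw [natDegree_comp, descPochhammer_natDegree, natDegree_X_add_C, mul_one]
  · have hm : (m.factorial : R) ≠ 0 := Nat.cast_ne_zero.2 m.factorial_ne_zero
    rw [eval_mul, eval_C, eval_comp, eval_add, eval_X, eval_C, ← Nat.cast_add,
      descPochhammer_eval_eq_descFactorial, Nat.descFactorial_eq_factorial_mul_choose,
      Nat.cast_mul, inv_mul_cancel_left₀ hm]

theorem exists_finset_upperClosure_eq {α : Type*} [PartialOrder α] [WellQuasiOrderedLE α]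
    (E : Set α) : ∃ F : Finset α, upperClosure (F : Set α) = upperClosure E := by
  have hfin : {x | Minimal (· ∈ E) x}.Finite :=
    WellQuasiOrderedLE.finite_of_isAntichain (setOfPred_minimal_antichain _)
  refine ⟨hfin.toFinset, SetLike.ext fun x => ?_⟩
  simp only [Set.Finite.coe_toFinset, mem_upperClosure, Set.mem_ofPred_eq]
  refine ⟨fun ⟨a, ha, hax⟩ => ⟨a, ha.prop, hax⟩, fun ⟨a, ha, hax⟩ => ?_⟩
  obtain ⟨b, hba, hb⟩ := E.isPWO_of_wellQuasiOrderedLE.exists_le_minimal ha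
  exact ⟨b, hb, hba.trans hax⟩

section Counting

variable {m : ℕ}

theorem finite_setOf_sum_le (s : ℕ) : {x : Fin m → ℕ | ∑ i, x i ≤ s}.Finite :=
  (Set.finite_Iic fun _ => s).subset fun x hx i =>
    (single_le_sum (fun j _ => Nat.zero_le (x j)) (mem_univ i)).trans hx

theorem ncard_setOf_sum_le (s : ℕ) :
    {x : Fin m → ℕ | ∑ i, x i ≤ s}.ncard = (s + m).choose m := by
  -- a slack coordinate `s - ord x` identifies the simplex with the points of `ℕ^(m+1)` of order `s`
  have himage : Fin.init '' {y : Fin (m + 1) → ℕ | ∑ i, y i = s} = {x | ∑ i, x i ≤ s} := by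
    ext x
    constructor
    · rintro ⟨y, hy, rfl⟩
      simp only [Set.mem_ofPred_eq, Fin.sum_univ_castSucc] at hy ⊢
      exact hy ▸ Nat.le_add_right _ _
    · intro hx
      refine ⟨Fin.snoc x (s - ∑ i, x i), ?_, Fin.init_snoc _ _⟩
      simp only [Set.mem_ofPred_eq, Fin.sum_univ_castSucc, Fin.snoc_castSucc, Fin.snoc_last]
      exact Nat.add_sub_cancel' hx
  have hinj : Set.InjOn Fin.init {y : Fin (m + 1) → ℕ | ∑ i, y i = s} := by
    intro y hy y' hy' h
    have hsum : ∑ i, Fin.init y i = ∑ i, Fin.init y' i := by rw [h]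
    simp only [Set.mem_ofPred_eq, Fin.sum_univ_castSucc] at hy hy'
    rw [← Fin.snoc_init_self y, ← Fin.snoc_init_self y', h]
    congr 1
    simp only [Fin.init] at hsum
    omega
  rw [← himage, hinj.ncard_image, ← Nat.card_coe_set_eq]
  change Nat.card {y : Fin (m + 1) → ℕ // ∑ i, y i = s} = _
  rw [← Nat.card_congr (Sym.equivNatSumOfFintype (Fin (m + 1)) s), Nat.card_eq_fintype_card,
    Sym.card_sym_eq_choose, Fintype.card_fin, add_right_comm,
    Nat.add_sub_cancel, add_comm, Nat.choose_symm_add]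

theorem omegaE_empty (s : ℕ) : omegaE (∅ : Set (Fin m → ℕ)) s = (s + m).choose m := by
  simp [omegaE, ncard_setOf_sum_le]

theorem omegaE_congr_upperClosure {E E' : Set (Fin m → ℕ)}
    (h : upperClosure E = upperClosure E') : omegaE E = omegaE E' := by
  have key (x : Fin m → ℕ) : (∀ e ∈ E, ¬ e ≤ x) ↔ ∀ e ∈ E', ¬ e ≤ x := by
    simpa only [mem_upperClosure, not_exists, not_and] using not_congr (SetLike.ext_iff.1 h x)
  funext s
  simp only [omegaE, key]

theorem omegaE_insert_add_omegaE_image_tsub (E : Set (Fin m → ℕ)) (e : Fin m → ℕ) {s : ℕ}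
    (hs : ∑ i, e i ≤ s) :
    omegaE (insert e E) s + omegaE ((· - e) '' E) (s - ∑ i, e i) = omegaE E s := by
  set V := {x : Fin m → ℕ | ∑ i, x i ≤ s ∧ ∀ f ∈ E, ¬ f ≤ x}
  have hdiff : V \ Set.Ici e = {x | ∑ i, x i ≤ s ∧ ∀ f ∈ insert e E, ¬ f ≤ x} := by
    ext x
    simp only [V, Set.mem_sdiff, Set.mem_ofPred_eq, Set.mem_Ici, Set.forall_mem_insert]
    tauto
  have hinter : V ∩ Set.Ici e =
      (· + e) '' {y | ∑ i, y i ≤ s - ∑ i, e i ∧ ∀ g ∈ (· - e) '' E, ¬ g ≤ y} := by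
    ext x
    constructor
    · rintro ⟨⟨hxs, hxE⟩, hex : e ≤ x⟩
      refine ⟨x - e, ⟨?_, ?_⟩, tsub_add_cancel_of_le hex⟩
      · have : ∑ i, (x - e) i = ∑ i, x i - ∑ i, e i := sum_tsub_distrib _ fun i _ => hex i
        omega
      · rintro _ ⟨f, hf, rfl⟩ hle
        exact hxE f hf (tsub_add_cancel_of_le hex ▸ tsub_le_iff_right.1 hle)
    · rintro ⟨y, ⟨hys, hyE⟩, rfl⟩
      dsimp only
      refine ⟨⟨?_, fun f hf hle => hyE _ ⟨f, hf, rfl⟩ (tsub_le_iff_right.2 hle)⟩,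
        Set.mem_Ici.2 le_add_self⟩
      have : ∑ i, (y + e) i = ∑ i, y i + ∑ i, e i := sum_add_distrib
      omega
  have hV : V.Finite := (finite_setOf_sum_le s).subset fun x hx => hx.1
  rw [omegaE, omegaE, omegaE, ← hdiff, add_comm,
    ← Set.ncard_image_of_injective _ (add_left_injective e), ← hinter,
    Set.ncard_inter_add_ncard_sdiff_eq_ncard V _ hV]

theorem eventuallyPoly_omegaE_finset [Field R] [CharZero R] (F : Finset (Fin m → ℕ)) :
    EventuallyPoly (fun s => (omegaE (F : Set (Fin m → ℕ)) s : R)) m := by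
  induction hn : F.card using Nat.strong_induction_on generalizing F with
  | _ n ih =>
  rcases F.eq_empty_or_nonempty with rfl | ⟨e, he⟩
  · simpa only [coe_empty, omegaE_empty] using eventuallyPoly_add_choose (R := R) m
  have hlt : (F.erase e).card < n := hn ▸ card_erase_lt_of_mem he
  have hrest := ih _ hlt _ rfl
  have hshift := (ih _ (card_image_le.trans_lt hlt) (F.erase e |>.image (· - e)) rfl).comp_tsub
    (∑ i, e i)
  refine (hrest.sub hshift).congr ?_
  filter_upwards [eventually_ge_atTop (∑ i, e i)] with s hs
  have hsplit := omegaE_insert_add_omegaE_image_tsub (F.erase e : Set _) e hs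
  rw [coe_erase, Set.insert_sdiff_singleton, Set.insert_eq_of_mem (mem_coe.2 he)] at hsplit
  rw [Pi.sub_apply, sub_eq_iff_eq_add, coe_image, coe_erase, ← Nat.cast_add, hsplit]

end Counting

/-- The Kolchin counting function ω_E agrees with a numerical polynomial of degree at most m
for all sufficiently large s. -/
theorem omegaE_eventually_polynomial (m : ℕ) (E : Set (Fin m → ℕ)) :
    ∃ p : Polynomial ℚ, p.natDegree ≤ m ∧
      ∀ᶠ s : ℕ in Filter.atTop, (omegaE E s : ℚ) = p.eval (s : ℚ) := by
  obtain ⟨F, hF⟩ := exists_finset_upperClosure_eq E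
  rw [← omegaE_congr_upperClosure hF]
  exact eventuallyPoly_omegaE_finset F
end

section
/- For any E ⊆ ℕ^m and any point e ∈ ℕ^m, for all sufficiently large s one has ω_E(s) = ω_{E ∪ {e}}(s) + ω_H(s - ord e), where H is the set obtained by subtracting e componentwise from each element of E, truncating negative coordinates at zero. -/
open Filter Finset Polynomial

lemma finite_aux {m s : ℕ} (P : (Fin m → ℕ) → Prop) :
    {x : Fin m → ℕ | (∑ i, x i) ≤ s ∧ P x}.Finite := by
  apply Set.Finite.subset
    (Set.Finite.pi (fun i : Fin m => Set.finite_Iic s) :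
      (Set.pi Set.univ fun _ => Set.Iic s).Finite)
  intro x hx
  simp only [Set.mem_pi, Set.mem_Iic, Set.mem_univ, forall_true_left]
  intro i
  exact le_trans (Finset.single_le_sum (fun j _ => Nat.zero_le _) (Finset.mem_univ i)) hx.1

/-- ω_E(s) = ω_{E ∪ {e}}(s) + ω_H(s - ord e), where H is obtained from E by componentwise
truncated subtraction of e. -/
theorem omegaE_insert_rec (m : ℕ) (E : Set (Fin m → ℕ)) (e : Fin m → ℕ) :
    ∀ᶠ s : ℕ in Filter.atTop,
      omegaE E s = omegaE (E ∪ {e}) s + omegaE ((fun f => f - e) '' E) (s - ∑ i, e i) := by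
  filter_upwards [Filter.eventually_ge_atTop (∑ i, e i)] with s hs
  set C : Set (Fin m → ℕ) := {x | (∑ i, x i) ≤ s ∧ (∀ f ∈ E, ¬ f ≤ x) ∧ e ≤ x} with hC
  have hAeq : {x : Fin m → ℕ | (∑ i, x i) ≤ s ∧ ∀ f ∈ E, ¬ f ≤ x}
      = {x : Fin m → ℕ | (∑ i, x i) ≤ s ∧ ∀ f ∈ E ∪ {e}, ¬ f ≤ x} ∪ C := by
    ext x
    simp only [Set.mem_setOf_eq, Set.mem_union, Set.mem_singleton_iff, hC]
    by_cases hex : e ≤ x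
    · constructor
      · rintro ⟨h1, h2⟩; exact Or.inr ⟨h1, h2, hex⟩
      · rintro (⟨h1, h2⟩ | ⟨h1, h2, _⟩)
        · exact ⟨h1, fun f hf => h2 f (Or.inl hf)⟩
        · exact ⟨h1, h2⟩
    · constructor
      · rintro ⟨h1, h2⟩
        refine Or.inl ⟨h1, ?_⟩
        rintro f (hf | rfl)
        · exact h2 f hf
        · exact hex
      · rintro (⟨h1, h2⟩ | ⟨h1, h2, h3⟩)
        · exact ⟨h1, fun f hf => h2 f (Or.inl hf)⟩
        · exact ⟨h1, h2⟩
  have hdisj : Disjoint {x : Fin m → ℕ | (∑ i, x i) ≤ s ∧ ∀ f ∈ E ∪ {e}, ¬ f ≤ x} C := by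
    rw [Set.disjoint_left]
    rintro x ⟨_, h2⟩ ⟨_, _, h3⟩
    exact h2 e (Or.inr rfl) h3
  have hCD : C = (fun y => y + e) ''
      {y : Fin m → ℕ | (∑ i, y i) ≤ s - ∑ i, e i ∧
        ∀ h ∈ (fun f => f - e) '' E, ¬ h ≤ y} := by
    ext x
    constructor
    · rintro ⟨h1, h2, h3⟩
      refine ⟨x - e, ⟨?_, ?_⟩, ?_⟩
      · have hsum : (∑ i, (x - e) i) + ∑ i, e i = ∑ i, x i := by
          rw [← Finset.sum_add_distrib]
          apply Finset.sum_congr rfl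
          intro i _
          have hb : e i ≤ x i := h3 i
          simp only [Pi.sub_apply]
          omega
        omega
      · rintro h ⟨f, hf, rfl⟩ hle
        refine h2 f hf ?_
        intro i
        have ha : f i - e i ≤ x i - e i := hle i
        have hb : e i ≤ x i := h3 i
        show f i ≤ x i
        omega
      · funext i
        have hb : e i ≤ x i := h3 i
        simp only [Pi.add_apply, Pi.sub_apply]
        omega
    · rintro ⟨y, ⟨h1, h2⟩, rfl⟩
      refine ⟨?_, ?_, ?_⟩
      · simp only [Pi.add_apply, Finset.sum_add_distrib]; omega
      · intro f hf hle
        refine h2 (f - e) ⟨f, hf, rfl⟩ ?_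
        intro i
        have ha := hle i
        simp only [Pi.sub_apply, Pi.add_apply] at ha ⊢
        omega
      · intro i
        simp only [Pi.add_apply]
        omega
  have hinj : Function.Injective (fun y : Fin m → ℕ => y + e) := by
    intro a b h
    funext i
    have := congrFun h i
    simp only [Pi.add_apply] at this
    omega
  unfold omegaE
  rw [hAeq, Set.ncard_union_eq hdisj (finite_aux _) (finite_aux _), hCD,
      Set.ncard_image_of_injective _ hinj]
end

section
/- The set W of numerical polynomials whose sequence of minimizing coefficients consists of non-negative integers is closed under addition: if ω₁, ω₂ ∈ W then ω₁ + ω₂ ∈ W. -/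
open Filter Finset Polynomial

/-- W: the set of Kolchin dimension polynomials, i.e. numerical polynomials that agree
eventually with ω_E for some m and E ⊆ ℕ^m. -/
noncomputable def IsKolchin (p : Polynomial ℚ) : Prop :=
  ∃ (m : ℕ) (E : Set (Fin m → ℕ)),
    ∀ᶠ s : ℕ in Filter.atTop, (omegaE E s : ℚ) = p.eval (s : ℚ)

/-! ### Auxiliary machinery -/

section Aux

/-- Finiteness of the sets being counted. -/
lemma omega_set_finite {k : ℕ} (P : (Fin k → ℕ) → Prop) (s : ℕ) :
    {x : Fin k → ℕ | (∑ i, x i) ≤ s ∧ P x}.Finite := by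
  apply Set.Finite.subset (Set.Finite.pi (fun i : Fin k => Set.finite_Iic s))
  intro x hx
  simp only [Set.mem_pi, Set.mem_univ, Set.mem_Iic, forall_true_left]
  intro i
  exact le_trans (Finset.single_le_sum (fun j _ => Nat.zero_le (x j)) (Finset.mem_univ i)) hx.1

lemma omega_zero {k : ℕ} (E : Set (Fin k → ℕ)) (h : ∃ e ∈ E, e ≤ (0 : Fin k → ℕ)) (s : ℕ) :
    omegaE E s = 0 := by
  obtain ⟨e, he, h0⟩ := h
  have hempty : {x : Fin k → ℕ | (∑ i, x i) ≤ s ∧ ∀ e ∈ E, ¬ e ≤ x} = ∅ := by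
    ext x
    simp only [Set.mem_setOf_eq, Set.mem_empty_iff_false, iff_false, not_and]
    intro _ hx
    exact hx e he (h0.trans (fun i => Nat.zero_le _))
  unfold omegaE
  rw [hempty, Set.ncard_empty]

/-- first-block embedding ℕ^m → ℕ^(m+n+1) -/
def emb1 (m n : ℕ) (u : Fin m → ℕ) : Fin (m+n+1) → ℕ :=
  Fin.append (Fin.append u (0 : Fin n → ℕ)) (0 : Fin 1 → ℕ)

/-- second-block embedding ℕ^n → ℕ^(m+n+1) -/
def emb2 (m n : ℕ) (v : Fin n → ℕ) : Fin (m+n+1) → ℕ :=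
  Fin.append (Fin.append (0 : Fin m → ℕ) v) (0 : Fin 1 → ℕ)

/-- the unit vector in the last coordinate -/
def delt (m n : ℕ) : Fin (m+n+1) → ℕ :=
  Fin.append (0 : Fin (m+n) → ℕ) (fun _ => 1)

def i1 (m n : ℕ) (i : Fin m) : Fin (m+n+1) := Fin.castAdd 1 (Fin.castAdd n i)
def i2 (m n : ℕ) (j : Fin n) : Fin (m+n+1) := Fin.castAdd 1 (Fin.natAdd m j)
def iL (m n : ℕ) (k : Fin 1) : Fin (m+n+1) := Fin.natAdd (m+n) k

lemma emb1_i1 (m n : ℕ) (u : Fin m → ℕ) (i : Fin m) : emb1 m n u (i1 m n i) = u i := by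
  simp [emb1, i1, Fin.append_left]

lemma emb1_i2 (m n : ℕ) (u : Fin m → ℕ) (j : Fin n) : emb1 m n u (i2 m n j) = 0 := by
  simp [emb1, i2, Fin.append_left, Fin.append_right]

lemma emb1_iL (m n : ℕ) (u : Fin m → ℕ) (k : Fin 1) : emb1 m n u (iL m n k) = 0 := by
  simp [emb1, iL, Fin.append_right]

lemma emb2_i1 (m n : ℕ) (v : Fin n → ℕ) (i : Fin m) : emb2 m n v (i1 m n i) = 0 := by
  simp [emb2, i1, Fin.append_left]

lemma emb2_i2 (m n : ℕ) (v : Fin n → ℕ) (j : Fin n) : emb2 m n v (i2 m n j) = v j := by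
  simp [emb2, i2, Fin.append_left, Fin.append_right]

lemma emb2_iL (m n : ℕ) (v : Fin n → ℕ) (k : Fin 1) : emb2 m n v (iL m n k) = 0 := by
  simp [emb2, iL, Fin.append_right]

lemma delt_c (m n : ℕ) (k : Fin (m+n)) : delt m n (Fin.castAdd 1 k) = 0 := by
  simp [delt, Fin.append_left]

lemma delt_i1 (m n : ℕ) (i : Fin m) : delt m n (i1 m n i) = 0 := delt_c m n _
lemma delt_i2 (m n : ℕ) (j : Fin n) : delt m n (i2 m n j) = 0 := delt_c m n _

lemma delt_iL (m n : ℕ) (k : Fin 1) : delt m n (iL m n k) = 1 := by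
  simp [delt, iL, Fin.append_right]

/-- extensionality by blocks -/
lemma ext3 {m n : ℕ} {x y : Fin (m+n+1) → ℕ}
    (h1 : ∀ i, x (i1 m n i) = y (i1 m n i))
    (h2 : ∀ j, x (i2 m n j) = y (i2 m n j))
    (h3 : ∀ k, x (iL m n k) = y (iL m n k)) : x = y :=
  funext fun i => Fin.addCases (fun k => Fin.addCases h1 h2 k) h3 i

lemma sum_split {m n : ℕ} (x : Fin (m+n+1) → ℕ) :
    (∑ i, x i) = (∑ i, x (i1 m n i)) + (∑ j, x (i2 m n j)) + (∑ k, x (iL m n k)) := by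
  rw [Fin.sum_univ_add (f := fun i : Fin ((m+n)+1) => x i),
      Fin.sum_univ_add (f := fun i : Fin (m+n) => x (Fin.castAdd 1 i))]
  rfl

lemma sum_emb1 (m n : ℕ) (u : Fin m → ℕ) : (∑ i, emb1 m n u i) = ∑ i, u i := by
  rw [sum_split (emb1 m n u)]
  simp [emb1_i1, emb1_i2, emb1_iL]

lemma sum_emb2 (m n : ℕ) (v : Fin n → ℕ) : (∑ i, emb2 m n v i) = ∑ j, v j := by
  rw [sum_split (emb2 m n v)]
  simp [emb2_i1, emb2_i2, emb2_iL]

lemma sum_delt (m n : ℕ) : (∑ i, delt m n i) = 1 := by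
  rw [sum_split (delt m n)]
  simp [delt_i1, delt_i2, delt_iL]

lemma emb1_inj (m n : ℕ) : Function.Injective (emb1 m n) := by
  intro u u' h
  funext i
  have := congrFun h (i1 m n i)
  rwa [emb1_i1, emb1_i1] at this

lemma emb2_inj (m n : ℕ) : Function.Injective (emb2 m n) := by
  intro v v' h
  funext j
  have := congrFun h (i2 m n j)
  rwa [emb2_i2, emb2_i2] at this

open Classical in
/-- The second embedding, adjusted to send `0` to the extra point `delt`. -/
noncomputable def phi (m n : ℕ) (v : Fin n → ℕ) : Fin (m+n+1) → ℕ :=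
  if v = 0 then delt m n else emb2 m n v

lemma phi_zero (m n : ℕ) : phi m n 0 = delt m n := by simp [phi]

lemma phi_ne (m n : ℕ) {v : Fin n → ℕ} (hv : v ≠ 0) : phi m n v = emb2 m n v := by
  simp [phi, hv]

lemma delt_ne_emb2 (m n : ℕ) (v : Fin n → ℕ) : delt m n ≠ emb2 m n v := by
  intro h
  have := congrFun h (iL m n 0)
  rw [delt_iL, emb2_iL] at this
  exact one_ne_zero this

lemma phi_inj (m n : ℕ) : Function.Injective (phi m n) := by
  intro v v' h
  by_cases hv : v = 0 <;> by_cases hv' : v' = 0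
  · rw [hv, hv']
  · exfalso
    rw [hv, phi_zero, phi_ne m n hv'] at h
    exact delt_ne_emb2 m n v' h
  · exfalso
    rw [hv', phi_zero, phi_ne m n hv] at h
    exact delt_ne_emb2 m n v h.symm
  · rw [phi_ne m n hv, phi_ne m n hv'] at h
    exact emb2_inj m n h

lemma emb1_ne_phi (m n : ℕ) (u : Fin m → ℕ) (v : Fin n → ℕ) : emb1 m n u ≠ phi m n v := by
  by_cases hv : v = 0
  · subst hv
    rw [phi_zero]
    intro h
    have := congrFun h (iL m n 0)
    rw [emb1_iL, delt_iL] at this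
    exact zero_ne_one this
  · rw [phi_ne m n hv]
    obtain ⟨j, hj⟩ := Function.ne_iff.mp hv
    intro h
    have := congrFun h (i2 m n j)
    rw [emb1_i2, emb2_i2] at this
    exact hj (by simpa using this.symm)

lemma sum_phi_le (m n : ℕ) (v : Fin n → ℕ) {s : ℕ} (hs : 1 ≤ s) :
    (∑ i, phi m n v i) ≤ s ↔ (∑ j, v j) ≤ s := by
  by_cases hv : v = 0
  · subst hv
    rw [phi_zero, sum_delt]
    simp [hs]
  · rw [phi_ne m n hv, sum_emb2]

/-- The key construction: for `E₁, E₂` not containing `0`, the complement of the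
downward-closed set `S = emb1 '' A₁ ∪ phi '' A₂` defines a set whose counting
function is the sum of the two counting functions (for `s ≥ 1`). -/
lemma key (m n : ℕ) (E₁ : Set (Fin m → ℕ)) (E₂ : Set (Fin n → ℕ))
    (h₁ : ∀ e ∈ E₁, ¬ e ≤ (0 : Fin m → ℕ)) (h₂ : ∀ e ∈ E₂, ¬ e ≤ (0 : Fin n → ℕ)) :
    ∀ s : ℕ, 1 ≤ s →
      omegaE ((emb1 m n '' {u | ∀ e ∈ E₁, ¬ e ≤ u} ∪ phi m n '' {v | ∀ e ∈ E₂, ¬ e ≤ v})ᶜ) s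
        = omegaE E₁ s + omegaE E₂ s := by
  intro s hs
  set A₁ : Set (Fin m → ℕ) := {u | ∀ e ∈ E₁, ¬ e ≤ u} with hA₁def
  set A₂ : Set (Fin n → ℕ) := {v | ∀ e ∈ E₂, ¬ e ≤ v} with hA₂def
  set S : Set (Fin (m+n+1) → ℕ) := emb1 m n '' A₁ ∪ phi m n '' A₂ with hSdef
  have h0A₁ : (0 : Fin m → ℕ) ∈ A₁ := fun e he => h₁ e he
  have h0A₂ : (0 : Fin n → ℕ) ∈ A₂ := fun e he => h₂ e he
  have hA₂dc : ∀ v v' : Fin n → ℕ, v' ≤ v → v ∈ A₂ → v' ∈ A₂ :=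
    fun v v' hle hv e he hex => hv e he (hex.trans hle)
  -- S is downward closed
  have hdc : ∀ x ∈ S, ∀ y, y ≤ x → y ∈ S := by
    rintro x hx y hy
    rcases hx with ⟨u, hu, rfl⟩ | ⟨v, hv, rfl⟩
    · -- below emb1 u
      refine Or.inl ⟨fun i => y (i1 m n i), ?_, ?_⟩
      · intro e he hle
        refine hu e he (fun i => (hle i).trans ?_)
        exact (hy (i1 m n i)).trans_eq (emb1_i1 m n u i)
      · refine ext3 (fun i => ?_) (fun j => ?_) (fun k => ?_)
        · rw [emb1_i1]
        · rw [emb1_i2]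
          exact (Nat.le_zero.mp ((hy (i2 m n j)).trans_eq (emb1_i2 m n u j))).symm
        · rw [emb1_iL]
          exact (Nat.le_zero.mp ((hy (iL m n k)).trans_eq (emb1_iL m n u k))).symm
    · by_cases hv0 : v = 0
      · -- below delt
        subst hv0
        rw [phi_zero] at hy
        have hyc1 : ∀ i, y (i1 m n i) = 0 :=
          fun i => Nat.le_zero.mp ((hy (i1 m n i)).trans_eq (delt_i1 m n i))
        have hyc2 : ∀ j, y (i2 m n j) = 0 :=
          fun j => Nat.le_zero.mp ((hy (i2 m n j)).trans_eq (delt_i2 m n j))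
        have hyL : ∀ k, y (iL m n k) ≤ 1 :=
          fun k => (hy (iL m n k)).trans_eq (delt_iL m n k)
        by_cases hL : y (iL m n 0) = 0
        · refine Or.inl ⟨0, h0A₁, ?_⟩
          refine ext3 (fun i => ?_) (fun j => ?_) (fun k => ?_)
          · rw [emb1_i1, Pi.zero_apply, hyc1]
          · rw [emb1_i2, hyc2]
          · rw [emb1_iL]
            have hk : k = 0 := Subsingleton.elim k 0
            rw [hk, hL]
        · refine Or.inr ⟨0, h0A₂, ?_⟩
          rw [phi_zero]
          refine ext3 (fun i => ?_) (fun j => ?_) (fun k => ?_)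
          · rw [delt_i1, hyc1]
          · rw [delt_i2, hyc2]
          · rw [delt_iL]
            have hk : k = 0 := Subsingleton.elim k 0
            have h1' := hyL 0
            rw [hk]
            omega
      · -- below emb2 v
        rw [phi_ne m n hv0] at hy
        have hyc1 : ∀ i, y (i1 m n i) = 0 :=
          fun i => Nat.le_zero.mp ((hy (i1 m n i)).trans_eq (emb2_i1 m n v i))
        have hyL : ∀ k, y (iL m n k) = 0 :=
          fun k => Nat.le_zero.mp ((hy (iL m n k)).trans_eq (emb2_iL m n v k))
        have hv'le : (fun j => y (i2 m n j)) ≤ v :=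
          fun j => (hy (i2 m n j)).trans_eq (emb2_i2 m n v j)
        have hv'A : (fun j => y (i2 m n j)) ∈ A₂ := hA₂dc v _ hv'le hv
        by_cases hv' : (fun j => y (i2 m n j)) = 0
        · refine Or.inl ⟨0, h0A₁, ?_⟩
          refine ext3 (fun i => ?_) (fun j => ?_) (fun k => ?_)
          · rw [emb1_i1, Pi.zero_apply, hyc1]
          · rw [emb1_i2]
            exact (congrFun hv' j).symm
          · rw [emb1_iL, hyL]
        · refine Or.inr ⟨_, hv'A, ?_⟩
          rw [phi_ne m n hv']
          refine ext3 (fun i => ?_) (fun j => ?_) (fun k => ?_)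
          · rw [emb2_i1, hyc1]
          · rw [emb2_i2]
          · rw [emb2_iL, hyL]
  -- admissibility wrt Sᶜ is membership in S
  have hadm : ∀ x : Fin (m+n+1) → ℕ, (∀ e ∈ Sᶜ, ¬ e ≤ x) ↔ x ∈ S := by
    intro x
    constructor
    · intro h
      by_contra hx
      exact h x hx le_rfl
    · intro hx e he hle
      exact he (hdc x hx e hle)
  -- the counted set splits
  have hset : {x : Fin (m+n+1) → ℕ | (∑ i, x i) ≤ s ∧ ∀ e ∈ Sᶜ, ¬ e ≤ x}
      = emb1 m n '' {u | (∑ i, u i) ≤ s ∧ ∀ e ∈ E₁, ¬ e ≤ u}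
        ∪ phi m n '' {v | (∑ j, v j) ≤ s ∧ ∀ e ∈ E₂, ¬ e ≤ v} := by
    ext x
    simp only [Set.mem_setOf_eq, hadm x, Set.mem_union, Set.mem_image]
    constructor
    · rintro ⟨hsum, (⟨u, hu, rfl⟩ | ⟨v, hv, rfl⟩)⟩
      · rw [sum_emb1] at hsum
        exact Or.inl ⟨u, ⟨hsum, hu⟩, rfl⟩
      · rw [sum_phi_le m n v hs] at hsum
        exact Or.inr ⟨v, ⟨hsum, hv⟩, rfl⟩
    · rintro (⟨u, ⟨hus, hu⟩, rfl⟩ | ⟨v, ⟨hvs, hv⟩, rfl⟩)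
      · exact ⟨by rw [sum_emb1]; exact hus, Or.inl ⟨u, hu, rfl⟩⟩
      · exact ⟨(sum_phi_le m n v hs).mpr hvs, Or.inr ⟨v, hv, rfl⟩⟩
  have hfin1 : ({u : Fin m → ℕ | (∑ i, u i) ≤ s ∧ ∀ e ∈ E₁, ¬ e ≤ u}).Finite :=
    omega_set_finite _ s
  have hfin2 : ({v : Fin n → ℕ | (∑ j, v j) ≤ s ∧ ∀ e ∈ E₂, ¬ e ≤ v}).Finite :=
    omega_set_finite _ s
  have hdisj : Disjoint
      (emb1 m n '' {u | (∑ i, u i) ≤ s ∧ ∀ e ∈ E₁, ¬ e ≤ u})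
      (phi m n '' {v | (∑ j, v j) ≤ s ∧ ∀ e ∈ E₂, ¬ e ≤ v}) := by
    rw [Set.disjoint_left]
    rintro x ⟨u, _, rfl⟩ ⟨v, _, hvx⟩
    exact emb1_ne_phi m n u v hvx.symm
  unfold omegaE
  rw [hset, Set.ncard_union_eq hdisj (hfin1.image _) (hfin2.image _),
      Set.ncard_image_of_injective _ (emb1_inj m n),
      Set.ncard_image_of_injective _ (phi_inj m n)]

end Aux

/-- W is closed under addition. -/
theorem isKolchin_add (p q : Polynomial ℚ) (hp : IsKolchin p) (hq : IsKolchin q) :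
    IsKolchin (p + q) := by
  obtain ⟨m, E₁, hp'⟩ := hp
  obtain ⟨n, E₂, hq'⟩ := hq
  by_cases hz₁ : ∃ e ∈ E₁, e ≤ (0 : Fin m → ℕ)
  · refine ⟨n, E₂, ?_⟩
    filter_upwards [hp', hq'] with s h1 h2
    rw [omega_zero E₁ hz₁ s] at h1
    simp only [Nat.cast_zero] at h1
    rw [eval_add, ← h1, zero_add]
    exact h2
  by_cases hz₂ : ∃ e ∈ E₂, e ≤ (0 : Fin n → ℕ)
  · refine ⟨m, E₁, ?_⟩
    filter_upwards [hp', hq'] with s h1 h2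
    rw [omega_zero E₂ hz₂ s] at h2
    simp only [Nat.cast_zero] at h2
    rw [eval_add, ← h2, add_zero]
    exact h1
  · push_neg at hz₁ hz₂
    refine ⟨m + n + 1,
      (emb1 m n '' {u | ∀ e ∈ E₁, ¬ e ≤ u} ∪ phi m n '' {v | ∀ e ∈ E₂, ¬ e ≤ v})ᶜ, ?_⟩
    filter_upwards [hp', hq', eventually_ge_atTop 1] with s h1 h2 hs
    rw [key m n E₁ E₂ hz₁ hz₂ s hs]
    push_cast
    rw [eval_add, h1, h2]
end

section
/- The set W of Kolchin dimension polynomials is closed under positive shift: if ω(s) ∈ W and j ∈ ℕ, then the polynomial ω(s + j) also belongs to W. -/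
/-!
Splitting the points of `ℕ^(m+1)` according to whether their first coordinate vanishes gives
`ω_E(s+1) = ω_{E - δ₀}(s) + ω_{E₀}(s+1)`, where `E₀ ⊆ ℕ^m` is the trace of `E` on the face
`x₀ = 0`. By induction on `m`, `s ↦ ω_E(s+1)` is therefore eventually a sum of functions of
the form `ω_{E'}`, and such sums are again of that form: gluing `ℕ^a` and `ℕ^b` at the origin
(by forbidding every mixed monomial `eᵢ + e_k`) realises `ω_{E₁} + ω_{E₂} - 1`, and gluing on a
copy of `ℕ` in which the point `2` is forbidden adds the missing `1` back.
-/

open Filter Finset Polynomial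

namespace Fin

variable {a b : ℕ}

theorem append_inj_iff {α : Type*} {u u' : Fin a → α} {v v' : Fin b → α} :
    append u v = append u' v' ↔ u = u' ∧ v = v' := by
  refine ⟨fun h => ⟨funext fun i => ?_, funext fun k => ?_⟩, fun ⟨hu, hv⟩ => hu ▸ hv ▸ rfl⟩
  · simpa using congrFun h (castAdd b i)
  · simpa using congrFun h (natAdd a k)

theorem append_le_append_iff {α : Type*} [Preorder α] {u u' : Fin a → α} {v v' : Fin b → α} :
    append u v ≤ append u' v' ↔ u ≤ u' ∧ v ≤ v' := by
  refine ⟨fun h => ⟨fun i => ?_, fun k => ?_⟩,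
    fun ⟨hu, hv⟩ i => addCases (fun i => ?_) (fun k => ?_) i⟩
  · simpa using h (castAdd b i)
  · simpa using h (natAdd a k)
  · simpa using hu i
  · simpa using hv k

@[simp]
theorem append_zero_zero {M : Type*} [Zero M] : append (0 : Fin a → M) (0 : Fin b → M) = 0 := by
  funext i
  refine addCases (fun i => ?_) (fun k => ?_) i <;> simp

theorem sum_append {M : Type*} [AddCommMonoid M] (u : Fin a → M) (v : Fin b → M) :
    ∑ i, append u v i = ∑ i, u i + ∑ i, v i := by
  simp [sum_univ_add]

end Fin

section Omega

variable {m : ℕ}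

def omegaSet (E : Set (Fin m → ℕ)) (s : ℕ) : Set (Fin m → ℕ) :=
  {x | (∑ i, x i) ≤ s ∧ ∀ e ∈ E, ¬ e ≤ x}

theorem omegaE_eq_ncard (E : Set (Fin m → ℕ)) (s : ℕ) : omegaE E s = (omegaSet E s).ncard := rfl

theorem omegaSet_finite (E : Set (Fin m → ℕ)) (s : ℕ) : (omegaSet E s).Finite :=
  (Set.finite_Iic fun _ => s).subset fun x hx i =>
    (Finset.single_le_sum (fun i _ => Nat.zero_le (x i)) (Finset.mem_univ i)).trans hx.1

theorem zero_mem_omegaSet {E : Set (Fin m → ℕ)} (h0 : 0 ∉ E) (s : ℕ) : 0 ∈ omegaSet E s :=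
  ⟨by simp, fun e he hle => h0 (nonpos_iff_eq_zero.mp hle ▸ he)⟩

theorem omegaE_eq_zero_of_zero_mem {E : Set (Fin m → ℕ)} (h0 : 0 ∈ E) (s : ℕ) :
    omegaE E s = 0 := by
  rw [omegaE_eq_ncard, Set.ncard_eq_zero (omegaSet_finite E s)]
  exact Set.eq_empty_of_forall_notMem fun x hx => hx.2 0 h0 zero_le

theorem omegaE_const (c s : ℕ) : omegaE {fun _ : Fin 1 => c} s = min c (s + 1) := by
  have : omegaSet {fun _ : Fin 1 => c} s = (fun n _ => n) '' Set.Iio (min c (s + 1)) := by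
    ext x
    obtain ⟨n, rfl⟩ : ∃ n : ℕ, x = fun _ => n :=
      ⟨x 0, funext fun i => by rw [Subsingleton.elim i 0]⟩
    simp only [omegaSet, Set.mem_ofPred_eq, Set.mem_singleton_iff, forall_eq]
    simp [Pi.le_def, funext_iff, and_comm]
  rw [omegaE_eq_ncard, this, Set.ncard_image_of_injective _ fun a b h => congrFun h 0,
    ← Finset.coe_range, Set.ncard_coe_finset, Finset.card_range]

theorem single_one_le_iff {ι : Type*} [DecidableEq ι] {i : ι} {x : ι → ℕ} :
    Pi.single i 1 ≤ x ↔ x i ≠ 0 := by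
  refine ⟨fun h => Nat.one_le_iff_ne_zero.mp (by simpa using h i), fun h j => ?_⟩
  rcases eq_or_ne j i with rfl | hj
  · simpa [Nat.one_le_iff_ne_zero]
  · simp [hj]

end Omega

section Wedge

variable {a b : ℕ}

def wedge (E₁ : Set (Fin a → ℕ)) (E₂ : Set (Fin b → ℕ)) : Set (Fin (a + b) → ℕ) :=
  (Fin.append · 0) '' E₁ ∪ (Fin.append 0 ·) '' E₂ ∪
    Set.range fun ik : Fin a × Fin b => Fin.append (Pi.single ik.1 1) (Pi.single ik.2 1)

theorem append_mem_omegaSet_wedge {E₁ : Set (Fin a → ℕ)} {E₂ : Set (Fin b → ℕ)} {s : ℕ}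
    {u : Fin a → ℕ} {v : Fin b → ℕ} :
    Fin.append u v ∈ omegaSet (wedge E₁ E₂) s ↔
      ∑ i, u i + ∑ i, v i ≤ s ∧ (∀ e ∈ E₁, ¬ e ≤ u) ∧ (∀ e ∈ E₂, ¬ e ≤ v) ∧ (u = 0 ∨ v = 0) := by
  simp only [omegaSet, wedge, Set.mem_ofPred_eq, Set.mem_union, or_imp, forall_and,
    Set.forall_mem_image, Set.forall_mem_range, Fin.append_le_append_iff, Fin.sum_append,
    single_one_le_iff, zero_le, and_true, true_and, Prod.forall, not_and_or, not_not,
    forall_or_left, forall_or_right, ← funext_iff, and_assoc]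
  rfl

theorem omegaSet_wedge {E₁ : Set (Fin a → ℕ)} {E₂ : Set (Fin b → ℕ)} (h₁ : 0 ∉ E₁) (h₂ : 0 ∉ E₂)
    (s : ℕ) : omegaSet (wedge E₁ E₂) s =
      (Fin.append · 0) '' omegaSet E₁ s ∪ (Fin.append 0 ·) '' omegaSet E₂ s := by
  ext x
  obtain ⟨u, v, rfl⟩ : ∃ u v, x = Fin.append u v := ⟨_, _, Fin.append_castAdd_natAdd.symm⟩
  simp only [append_mem_omegaSet_wedge, Set.mem_union, Set.mem_image, Fin.append_inj_iff]
  constructor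
  · rintro ⟨hs, hu, hv, rfl | rfl⟩
    · exact .inr ⟨v, ⟨by simpa using hs, hv⟩, rfl, rfl⟩
    · exact .inl ⟨u, ⟨by simpa using hs, hu⟩, rfl, rfl⟩
  · rintro (⟨u, ⟨hs, hu⟩, rfl, rfl⟩ | ⟨v, ⟨hs, hv⟩, rfl, rfl⟩)
    · exact ⟨by simpa using hs, hu, (zero_mem_omegaSet h₂ s).2, .inr rfl⟩
    · exact ⟨by simpa using hs, (zero_mem_omegaSet h₁ s).2, hv, .inl rfl⟩

theorem omegaE_wedge {E₁ : Set (Fin a → ℕ)} {E₂ : Set (Fin b → ℕ)} (h₁ : 0 ∉ E₁) (h₂ : 0 ∉ E₂)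
    (s : ℕ) : omegaE (wedge E₁ E₂) s + 1 = omegaE E₁ s + omegaE E₂ s := by
  have hinter : (Fin.append · 0) '' omegaSet E₁ s ∩ (Fin.append 0 ·) '' omegaSet E₂ s = {0} := by
    refine Set.eq_singleton_iff_unique_mem.mpr ⟨⟨⟨0, zero_mem_omegaSet h₁ s, by simp⟩,
      ⟨0, zero_mem_omegaSet h₂ s, by simp⟩⟩, ?_⟩
    rintro _ ⟨⟨u, -, rfl⟩, ⟨v, -, huv⟩⟩
    obtain ⟨rfl, rfl⟩ := Fin.append_inj_iff.mp huv
    simp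
  rw [omegaE_eq_ncard, omegaSet_wedge h₁ h₂, ← Set.ncard_singleton (0 : Fin (a + b) → ℕ), ← hinter,
    Set.ncard_union_add_ncard_inter _ _ ((omegaSet_finite _ _).image _)
      ((omegaSet_finite _ _).image _),
    Set.ncard_image_of_injective _ fun u u' h => (Fin.append_inj_iff.mp h).1,
    Set.ncard_image_of_injective _ fun v v' h => (Fin.append_inj_iff.mp h).2]
  rfl

theorem zero_notMem_wedge {E₁ : Set (Fin a → ℕ)} {E₂ : Set (Fin b → ℕ)} (h₁ : 0 ∉ E₁)
    (h₂ : 0 ∉ E₂) : 0 ∉ wedge E₁ E₂ := by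
  rw [← Fin.append_zero_zero]
  rintro ((⟨e, he, h⟩ | ⟨e, he, h⟩) | ⟨⟨i, k⟩, h⟩) <;> simp only [Fin.append_inj_iff] at h
  · exact h₁ (h.1 ▸ he)
  · exact h₂ (h.2 ▸ he)
  · simpa using congrFun h.1 i

end Wedge

section Succ

variable {m : ℕ}

-- Truncated subtraction is harmless here: `e - δ₀ ≤ y ↔ e ≤ y + δ₀` holds for every `e`.
def shiftDown (E : Set (Fin (m + 1) → ℕ)) : Set (Fin (m + 1) → ℕ) :=
  (· - Pi.single 0 1) '' E

def face (E : Set (Fin (m + 1) → ℕ)) : Set (Fin m → ℕ) :=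
  {z | Fin.cons 0 z ∈ E}

theorem add_single_mem_omegaSet_succ {E : Set (Fin (m + 1) → ℕ)} {s : ℕ} {y : Fin (m + 1) → ℕ} :
    y + Pi.single 0 1 ∈ omegaSet E (s + 1) ↔ y ∈ omegaSet (shiftDown E) s := by
  simp [omegaSet, shiftDown, Finset.sum_add_distrib, tsub_le_iff_right]

theorem cons_zero_mem_omegaSet {E : Set (Fin (m + 1) → ℕ)} {s : ℕ} {z : Fin m → ℕ} :
    Fin.cons 0 z ∈ omegaSet E s ↔ z ∈ omegaSet (face E) s := by
  simp only [omegaSet, face, Set.mem_ofPred_eq, Fin.sum_cons, zero_add,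
    and_congr_right_iff]
  refine fun _ => ⟨fun h z' hz' hle => h _ hz' (Fin.cons_le_cons.mpr ⟨le_rfl, hle⟩),
    fun h e he hle => ?_⟩
  obtain ⟨he0, hle⟩ := Fin.le_cons.mp hle
  rw [← Fin.cons_self_tail e, nonpos_iff_eq_zero.mp he0] at he
  exact h _ he hle

theorem add_single_ne_cons_zero (y : Fin (m + 1) → ℕ) (z : Fin m → ℕ) :
    y + Pi.single 0 1 ≠ Fin.cons 0 z := fun h => by simpa using congrFun h 0

theorem omegaSet_succ (E : Set (Fin (m + 1) → ℕ)) (s : ℕ) :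
    omegaSet E (s + 1) = (· + Pi.single 0 1) '' omegaSet (shiftDown E) s ∪
      Fin.cons 0 '' omegaSet (face E) (s + 1) := by
  ext x
  rcases eq_or_ne (x 0) 0 with h0 | h0
  · rw [← Fin.cons_self_tail x, h0]
    simp [cons_zero_mem_omegaSet, (Fin.cons_right_injective _).mem_set_image,
      add_single_ne_cons_zero]
  · obtain ⟨y, rfl⟩ : ∃ y, x = y + Pi.single 0 1 :=
      ⟨x - Pi.single 0 1, (tsub_add_cancel_of_le (single_one_le_iff.mpr h0)).symm⟩
    simp [add_single_mem_omegaSet_succ, (add_left_injective _).mem_set_image,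
      (add_single_ne_cons_zero _ _).symm]

theorem omegaE_succ (E : Set (Fin (m + 1) → ℕ)) (s : ℕ) :
    omegaE E (s + 1) = omegaE (shiftDown E) s + omegaE (face E) (s + 1) := by
  have hdisj : Disjoint ((· + Pi.single 0 1) '' omegaSet (shiftDown E) s)
      (Fin.cons 0 '' omegaSet (face E) (s + 1)) := by
    rw [Set.disjoint_left]
    rintro _ ⟨y, -, rfl⟩ ⟨z, -, h⟩
    exact add_single_ne_cons_zero y z h.symm
  rw [omegaE_eq_ncard, omegaSet_succ, Set.ncard_union_eq hdisj ((omegaSet_finite _ _).image _)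
      ((omegaSet_finite _ _).image _), Set.ncard_image_of_injective _ (add_left_injective _),
    Set.ncard_image_of_injective _ (Fin.cons_right_injective _)]
  rfl

end Succ

def IsEventuallyOmega (f : ℕ → ℕ) : Prop :=
  ∃ (m : ℕ) (E : Set (Fin m → ℕ)), omegaE E =ᶠ[atTop] f

theorem isEventuallyOmega_omegaE {m : ℕ} (E : Set (Fin m → ℕ)) : IsEventuallyOmega (omegaE E) :=
  ⟨m, E, .rfl⟩

theorem IsEventuallyOmega.congr {f g : ℕ → ℕ} (hf : IsEventuallyOmega f)
    (hfg : f =ᶠ[atTop] g) : IsEventuallyOmega g :=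
  let ⟨m, E, hE⟩ := hf
  ⟨m, E, hE.trans hfg⟩

theorem IsEventuallyOmega.add {f g : ℕ → ℕ} (hf : IsEventuallyOmega f)
    (hg : IsEventuallyOmega g) : IsEventuallyOmega (f + g) := by
  obtain ⟨a, E₁, hf⟩ := hf
  obtain ⟨b, E₂, hg⟩ := hg
  by_cases h₁ : 0 ∈ E₁
  · refine ⟨b, E₂, hg.trans ?_⟩
    filter_upwards [hf] with s hs
    simp [← hs, omegaE_eq_zero_of_zero_mem h₁]
  by_cases h₂ : 0 ∈ E₂
  · refine ⟨a, E₁, hf.trans ?_⟩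
    filter_upwards [hg] with s hs
    simp [← hs, omegaE_eq_zero_of_zero_mem h₂]
  refine ⟨_, wedge (wedge E₁ E₂) {fun _ : Fin 1 => 2}, ?_⟩
  filter_upwards [hf, hg, eventually_ge_atTop 1] with s hfs hgs hs
  have h₁₂ := omegaE_wedge h₁ h₂ s
  have h₁₂₃ := omegaE_wedge (zero_notMem_wedge h₁ h₂) (E₂ := {fun _ : Fin 1 => 2})
    (by simp [funext_iff]) s
  rw [omegaE_const] at h₁₂₃
  simp only [Pi.add_apply, ← hfs, ← hgs]
  omega

theorem isEventuallyOmega_omegaE_succ :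
    ∀ {m : ℕ} (E : Set (Fin m → ℕ)), IsEventuallyOmega fun s => omegaE E (s + 1)
  | 0, E => (isEventuallyOmega_omegaE E).congr (.of_forall fun s => by simp [omegaE])
  | _ + 1, E => ((isEventuallyOmega_omegaE (shiftDown E)).add
      (isEventuallyOmega_omegaE_succ (face E))).congr (.of_forall fun s => (omegaE_succ E s).symm)

theorem IsEventuallyOmega.comp_add_one {f : ℕ → ℕ} (hf : IsEventuallyOmega f) :
    IsEventuallyOmega fun s => f (s + 1) :=
  let ⟨_, E, hE⟩ := hf
  (isEventuallyOmega_omegaE_succ E).congr (hE.comp_tendsto (tendsto_add_atTop_nat 1))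

theorem IsEventuallyOmega.comp_add {f : ℕ → ℕ} (hf : IsEventuallyOmega f) (j : ℕ) :
    IsEventuallyOmega fun s => f (s + j) := by
  induction j with
  | zero => exact hf
  | succ j ih => simpa only [add_right_comm _ 1 j, add_assoc] using ih.comp_add_one

/-- W is closed under positive shift: if ω(s) ∈ W and j ∈ ℕ then ω(s + j) ∈ W. -/
theorem isKolchin_shift (p : Polynomial ℚ) (hp : IsKolchin p) (j : ℕ) :
    IsKolchin (p.comp (Polynomial.X + Polynomial.C (j : ℚ))) := by
  obtain ⟨m, E, hE⟩ := hp
  obtain ⟨m', E', hE'⟩ := (isEventuallyOmega_omegaE E).comp_add j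
  refine ⟨m', E', ?_⟩
  filter_upwards [hE', (tendsto_add_atTop_nat j).eventually hE] with s h₁ h₂
  rw [h₁, eval_comp, h₂]
  simp
end

section
/- Let E ⊆ ℕ^3 be the set of rows (k−i, ik, i) for i = 0,1,...,k with k ≥ 1. Then for sufficiently large s, ω_E(s) is a polynomial of degree 1 in s, and Δ₁ω_E(s) = ω_{E₂}(s) + ω_{E₃}(s), where E₂, E₃ ⊆ ℕ² are obtained by deleting the second and third columns of E respectively, and eventually ω_{E₂} = k(k+1)/2 and ω_{E₃} = k²(k+1)/2, so that Δ₁ω_E is eventually the constant k(k+1)/2 + k²(k+1)/2. -/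
open Filter Finset Polynomial

namespace OmegaAux3

lemma vec2_le (p q : ℕ) (x : Fin 2 → ℕ) : ![p, q] ≤ x ↔ p ≤ x 0 ∧ q ≤ x 1 := by
  constructor
  · intro h; exact ⟨h 0, h 1⟩
  · rintro ⟨h1, h2⟩ j; fin_cases j <;> simpa

lemma vec3_le (p q r : ℕ) (x : Fin 3 → ℕ) : ![p, q, r] ≤ x ↔ p ≤ x 0 ∧ q ≤ x 1 ∧ r ≤ x 2 := by
  constructor
  · intro h; exact ⟨h 0, h 1, h 2⟩
  · rintro ⟨h1, h2, h3⟩ j; fin_cases j <;> simpa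

lemma avoid_iff {m : ℕ} (k : ℕ) (f : ℕ → Fin m → ℕ) (x : Fin m → ℕ) :
    (∀ e ∈ {y : Fin m → ℕ | ∃ i ≤ k, y = f i}, ¬ e ≤ x) ↔ ∀ i ≤ k, ¬ f i ≤ x := by
  constructor
  · intro h i hi; exact h _ ⟨i, hi, rfl⟩
  · rintro h e ⟨i, hi, rfl⟩; exact h i hi

lemma cond2 (k : ℕ) (x : Fin 2 → ℕ) :
    (∀ i ≤ k, ¬ ![k - i, i] ≤ x) ↔ x 0 + x 1 < k := by
  constructor
  · intro h
    have h1 := h (min (x 1) k) (by omega)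
    rw [vec2_le] at h1
    omega
  · intro h i hi hle
    rw [vec2_le] at hle
    omega

lemma cond3 (k : ℕ) (x : Fin 2 → ℕ) :
    (∀ i ≤ k, ¬ ![k - i, i * k] ≤ x) ↔ x 0 < k ∧ x 1 < (k - x 0) * k := by
  constructor
  · intro h
    have h0 := h 0 (Nat.zero_le k)
    rw [vec2_le] at h0
    have hx0 : x 0 < k := by simpa using h0
    have h1 := h (k - x 0) (Nat.sub_le k (x 0))
    rw [vec2_le] at h1
    refine ⟨hx0, ?_⟩
    by_contra hb
    exact h1 ⟨by omega, by omega⟩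
  · rintro ⟨h1, h2⟩ i hi hle
    rw [vec2_le] at hle
    have hia : k - x 0 ≤ i := by omega
    have hm : (k - x 0) * k ≤ i * k := Nat.mul_le_mul_right k hia
    omega

lemma cond3d (k : ℕ) (x : Fin 3 → ℕ) :
    (∀ i ≤ k, ¬ ![k - i, i * k, i] ≤ x) ↔
      x 0 < k ∧ (k - x 0 ≤ x 2 → x 1 < (k - x 0) * k) := by
  constructor
  · intro h
    have h0 := h 0 (Nat.zero_le k)
    rw [vec3_le] at h0
    have hx0 : x 0 < k := by simpa using h0
    refine ⟨hx0, fun hc => ?_⟩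
    have h1 := h (k - x 0) (Nat.sub_le k (x 0))
    rw [vec3_le] at h1
    by_contra hb
    exact h1 ⟨by omega, by omega, hc⟩
  · rintro ⟨h1, h2⟩ i hi hle
    rw [vec3_le] at hle
    have hia : k - x 0 ≤ i := by omega
    have := h2 (le_trans hia hle.2.2)
    have hm : (k - x 0) * k ≤ i * k := Nat.mul_le_mul_right k hia
    omega

lemma gauss (k : ℕ) : 2 * ∑ a ∈ range k, (k - a) = k * (k + 1) := by
  induction k with
  | zero => simp
  | succ n ih =>
    rw [Finset.sum_range_succ]
    have h1 : ∑ a ∈ range n, (n + 1 - a) = ∑ a ∈ range n, ((n - a) + 1) :=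
      Finset.sum_congr rfl fun a ha => by have := Finset.mem_range.mp ha; omega
    rw [h1, Finset.sum_add_distrib, Finset.sum_const, Finset.card_range, smul_eq_mul]
    have : (n + 1) * (n + 1 + 1) = n * (n + 1) + 2 * (n + 1) := by ring
    omega

def T2 (k : ℕ) : Finset (Fin 2 → ℕ) :=
  ((range k).sigma fun a => range (k - a)).image fun q => ![q.1, q.2]

def T3 (k : ℕ) : Finset (Fin 2 → ℕ) :=
  ((range k).sigma fun a => range ((k - a) * k)).image fun q => ![q.1, q.2]

def L (k s : ℕ) : Finset (Fin 3 → ℕ) :=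
  (((range k).sigma fun a => range (k - a)).image fun q => ![q.1, s - q.1 - q.2, q.2]) ∪
  (((range k).sigma fun a => range ((k - a) * k)).image fun q => ![q.1, q.2, s - q.1 - q.2])

lemma inj2 : Function.Injective (fun q : Σ _ : ℕ, ℕ => (![q.1, q.2] : Fin 2 → ℕ)) := by
  rintro ⟨a, b⟩ ⟨c, d⟩ h
  have h0 := congrFun h 0
  have h1 := congrFun h 1
  simp at h0 h1
  subst h0; subst h1; rfl

lemma card_T2 (k : ℕ) : (T2 k).card = ∑ a ∈ range k, (k - a) := by
  rw [T2, Finset.card_image_of_injective _ inj2, Finset.card_sigma]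
  simp

lemma card_T3 (k : ℕ) : (T3 k).card = (∑ a ∈ range k, (k - a)) * k := by
  rw [T3, Finset.card_image_of_injective _ inj2, Finset.card_sigma, Finset.sum_mul]
  simp

lemma two_card_T2 (k : ℕ) : 2 * (T2 k).card = k * (k + 1) := by
  rw [card_T2]; exact gauss k

lemma two_card_T3 (k : ℕ) : 2 * (T3 k).card = k ^ 2 * (k + 1) := by
  rw [card_T3, ← Nat.mul_assoc, gauss]; ring

lemma mem_T2 (k : ℕ) (x : Fin 2 → ℕ) : x ∈ T2 k ↔ x 0 + x 1 < k := by
  rw [T2, Finset.mem_image]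
  constructor
  · rintro ⟨⟨a, b⟩, hm, rfl⟩
    simp only [Finset.mem_sigma, Finset.mem_range] at hm
    simpa using by omega
  · intro h
    refine ⟨⟨x 0, x 1⟩, ?_, ?_⟩
    · simp only [Finset.mem_sigma, Finset.mem_range]; omega
    · funext i; fin_cases i <;> rfl

lemma mem_T3 (k : ℕ) (x : Fin 2 → ℕ) : x ∈ T3 k ↔ x 0 < k ∧ x 1 < (k - x 0) * k := by
  rw [T3, Finset.mem_image]
  constructor
  · rintro ⟨⟨a, b⟩, hm, rfl⟩
    simp only [Finset.mem_sigma, Finset.mem_range] at hm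
    simpa using hm
  · rintro ⟨h1, h2⟩
    refine ⟨⟨x 0, x 1⟩, ?_, ?_⟩
    · simp only [Finset.mem_sigma, Finset.mem_range]; exact ⟨h1, h2⟩
    · funext i; fin_cases i <;> rfl

set_option linter.unnecessarySeqFocus false in
lemma mem_L (k s : ℕ) (hs : k * k + k ≤ s) (x : Fin 3 → ℕ) :
    x ∈ L k s ↔ x 0 + x 1 + x 2 = s ∧ x 0 < k ∧ (k - x 0 ≤ x 2 → x 1 < (k - x 0) * k) := by
  rw [L, Finset.mem_union, Finset.mem_image, Finset.mem_image]
  constructor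
  · rintro (⟨⟨a, c⟩, hm, rfl⟩ | ⟨⟨a, b⟩, hm, rfl⟩) <;>
      simp only [Finset.mem_sigma, Finset.mem_range] at hm
    · refine ⟨by simpa using by omega, by simpa using hm.1, ?_⟩
      intro h
      simp only [Matrix.cons_val_zero, Matrix.cons_val_two, Matrix.tail_cons,
        Matrix.head_cons] at h
      omega
    · have hle : (k - a) * k ≤ k * k := Nat.mul_le_mul_right k (Nat.sub_le k a)
      refine ⟨by simpa using by omega, by simpa using hm.1, ?_⟩
      intro _
      simpa using hm.2
  · rintro ⟨hsum, h1, h2⟩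
    by_cases hc : k - x 0 ≤ x 2
    · right
      refine ⟨⟨x 0, x 1⟩, ?_, ?_⟩
      · simp only [Finset.mem_sigma, Finset.mem_range]; exact ⟨h1, h2 hc⟩
      · funext i
        fin_cases i <;> simp <;> omega
    · left
      refine ⟨⟨x 0, x 2⟩, ?_, ?_⟩
      · simp only [Finset.mem_sigma, Finset.mem_range]; exact ⟨h1, by omega⟩
      · funext i
        fin_cases i <;> simp <;> omega

lemma card_L (k s : ℕ) (hs : k * k + k ≤ s) : (L k s).card = (T2 k).card + (T3 k).card := by
  rw [L, Finset.card_union_of_disjoint, T2, T3]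
  · congr 1
    · rw [Finset.card_image_of_injOn, Finset.card_image_of_injective]
      · rintro ⟨a, b⟩ ⟨c, d⟩ h
        have h0 := congrFun h 0
        have h1 := congrFun h 1
        simp at h0 h1
        subst h0; subst h1; rfl
      · rintro ⟨a, b⟩ _ ⟨c, d⟩ _ h
        have h0 := congrFun h 0
        have h1 := congrFun h 2
        simp at h0 h1
        subst h0; subst h1; rfl
    · rw [Finset.card_image_of_injOn, Finset.card_image_of_injective]
      · rintro ⟨a, b⟩ ⟨c, d⟩ h
        have h0 := congrFun h 0
        have h1 := congrFun h 1
        simp at h0 h1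
        subst h0; subst h1; rfl
      · rintro ⟨a, b⟩ _ ⟨c, d⟩ _ h
        have h0 := congrFun h 0
        have h1 := congrFun h 1
        simp at h0 h1
        subst h0; subst h1; rfl
  · rw [Finset.disjoint_left]
    rintro x hx1 hx2
    rw [Finset.mem_image] at hx1 hx2
    obtain ⟨⟨a, c⟩, hm1, rfl⟩ := hx1
    obtain ⟨⟨a', b'⟩, hm2, hx⟩ := hx2
    simp only [Finset.mem_sigma, Finset.mem_range] at hm1 hm2
    have h0 := congrFun hx 0
    have h1 := congrFun hx 1
    have h2 := congrFun hx 2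
    simp at h0 h1 h2
    have hle : (k - a') * k ≤ k * k := Nat.mul_le_mul_right k (Nat.sub_le k a')
    omega

lemma omega_eq_card {m : ℕ} (E : Set (Fin m → ℕ)) (s : ℕ) (F : Finset (Fin m → ℕ))
    (h : ∀ x, ((∑ i, x i) ≤ s ∧ ∀ e ∈ E, ¬ e ≤ x) ↔ x ∈ F) : omegaE E s = F.card := by
  rw [omegaE, show {x : Fin m → ℕ | (∑ i, x i) ≤ s ∧ ∀ e ∈ E, ¬ e ≤ x} = (F : Set (Fin m → ℕ))
    from Set.ext fun x => (h x).trans Finset.mem_coe.symm, Set.ncard_coe_finset]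

lemma omega2_eq (k s : ℕ) (hs : k * k + k ≤ s) :
    omegaE {x : Fin 2 → ℕ | ∃ i ≤ k, x = ![k - i, i]} s = (T2 k).card := by
  apply omega_eq_card
  intro x
  rw [Fin.sum_univ_two, avoid_iff, cond2, mem_T2]
  constructor
  · exact fun h => h.2
  · exact fun h => ⟨by omega, h⟩

lemma omega3_eq (k s : ℕ) (hs : k * k + k ≤ s) :
    omegaE {x : Fin 2 → ℕ | ∃ i ≤ k, x = ![k - i, i * k]} s = (T3 k).card := by
  apply omega_eq_card
  intro x
  rw [Fin.sum_univ_two, avoid_iff, cond3, mem_T3]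
  constructor
  · exact fun h => h.2
  · intro h
    have hle : (k - x 0) * k ≤ k * k := Nat.mul_le_mul_right k (Nat.sub_le k (x 0))
    exact ⟨by omega, h⟩

lemma S_finite (k s : ℕ) :
    {x : Fin 3 → ℕ | (∑ i, x i) ≤ s ∧
      ∀ e ∈ {y : Fin 3 → ℕ | ∃ i ≤ k, y = ![k - i, i * k, i]}, ¬ e ≤ x}.Finite := by
  apply Set.Finite.subset (Finset.finite_toSet (Fintype.piFinset fun _ : Fin 3 => range (s + 1)))
  intro x hx
  simp only [Finset.coe_sort_coe, Finset.mem_coe, Fintype.mem_piFinset, Finset.mem_range]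
  intro i
  have := hx.1
  rw [Fin.sum_univ_three] at this
  fin_cases i <;> simp <;> omega

lemma step (k s : ℕ) (hs : k * k + k + 1 ≤ s) :
    omegaE {x : Fin 3 → ℕ | ∃ i ≤ k, x = ![k - i, i * k, i]} s
      = omegaE {x : Fin 3 → ℕ | ∃ i ≤ k, x = ![k - i, i * k, i]} (s - 1)
        + ((T2 k).card + (T3 k).card) := by
  have hsplit : {x : Fin 3 → ℕ | (∑ i, x i) ≤ s ∧
        ∀ e ∈ {y : Fin 3 → ℕ | ∃ i ≤ k, y = ![k - i, i * k, i]}, ¬ e ≤ x}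
      = {x : Fin 3 → ℕ | (∑ i, x i) ≤ s - 1 ∧
          ∀ e ∈ {y : Fin 3 → ℕ | ∃ i ≤ k, y = ![k - i, i * k, i]}, ¬ e ≤ x}
        ∪ (L k s : Set (Fin 3 → ℕ)) := by
    ext x
    have hiff : (∀ e ∈ {y : Fin 3 → ℕ | ∃ i ≤ k, y = ![k - i, i * k, i]}, ¬ e ≤ x)
        ↔ x 0 < k ∧ (k - x 0 ≤ x 2 → x 1 < (k - x 0) * k) :=
      (avoid_iff k _ x).trans (cond3d k x)
    simp only [Set.mem_setOf_eq, Set.mem_union, Finset.mem_coe,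
      mem_L k s (by omega) x, Fin.sum_univ_three]
    constructor
    · rintro ⟨hsum, hc⟩
      by_cases h : x 0 + x 1 + x 2 ≤ s - 1
      · exact Or.inl ⟨h, hc⟩
      · exact Or.inr ⟨by omega, hiff.mp hc⟩
    · rintro (⟨hsum, hc⟩ | ⟨hsum, hc⟩)
      · exact ⟨by omega, hc⟩
      · exact ⟨by omega, hiff.mpr hc⟩
  have hdisj : Disjoint
      {x : Fin 3 → ℕ | (∑ i, x i) ≤ s - 1 ∧
        ∀ e ∈ {y : Fin 3 → ℕ | ∃ i ≤ k, y = ![k - i, i * k, i]}, ¬ e ≤ x}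
      (L k s : Set (Fin 3 → ℕ)) := by
    rw [Set.disjoint_left]
    rintro x hx1 hx2
    rw [Finset.mem_coe, mem_L k s (by omega) x] at hx2
    have := hx1.1
    rw [Fin.sum_univ_three] at this
    omega
  rw [omegaE, hsplit, Set.ncard_union_eq hdisj (S_finite k (s - 1)) (Finset.finite_toSet _),
    Set.ncard_coe_finset, card_L k s (by omega)]
  rfl

end OmegaAux3

/-- For E = {(k-i, ik, i) : 0 ≤ i ≤ k} ⊆ ℕ³, ω_E is eventually a polynomial of degree 1,
Δ₁ω_E(s) = ω_{E₂}(s) + ω_{E₃}(s) where E₂, E₃ arise by deleting the second resp. third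
columns, and eventually ω_{E₂} = k(k+1)/2, ω_{E₃} = k²(k+1)/2. -/
theorem omegaE_example3 (k : ℕ) (hk : 1 ≤ k) :
    (∃ p : Polynomial ℚ, p.natDegree = 1 ∧
        ∀ᶠ s : ℕ in Filter.atTop,
          (omegaE {x : Fin 3 → ℕ | ∃ i ≤ k, x = ![k - i, i * k, i]} s : ℚ)
            = p.eval (s : ℚ)) ∧
      ∀ᶠ s : ℕ in Filter.atTop,
        omegaE {x : Fin 3 → ℕ | ∃ i ≤ k, x = ![k - i, i * k, i]} s
          = omegaE {x : Fin 3 → ℕ | ∃ i ≤ k, x = ![k - i, i * k, i]} (s - 1)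
            + (omegaE {x : Fin 2 → ℕ | ∃ i ≤ k, x = ![k - i, i]} s
              + omegaE {x : Fin 2 → ℕ | ∃ i ≤ k, x = ![k - i, i * k]} s) ∧
        2 * omegaE {x : Fin 2 → ℕ | ∃ i ≤ k, x = ![k - i, i]} s = k * (k + 1) ∧
        2 * omegaE {x : Fin 2 → ℕ | ∃ i ≤ k, x = ![k - i, i * k]} s = k ^ 2 * (k + 1) := by
  have h2T2 := OmegaAux3.two_card_T2 k
  have h2T3 := OmegaAux3.two_card_T3 k
  set N : ℕ := k * k + k with hN
  set A : ℕ := (OmegaAux3.T2 k).card + (OmegaAux3.T3 k).card with hA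
  have hkk : 1 * 2 ≤ k * (k + 1) := Nat.mul_le_mul hk (by omega)
  have hApos : 0 < A := by omega
  have hval : ∀ s, N ≤ s →
      omegaE {x : Fin 3 → ℕ | ∃ i ≤ k, x = ![k - i, i * k, i]} s
        = omegaE {x : Fin 3 → ℕ | ∃ i ≤ k, x = ![k - i, i * k, i]} N + A * (s - N) := by
    intro s hs
    induction s, hs using Nat.le_induction with
    | base => simp
    | succ n hn ih =>
      have hstep := OmegaAux3.step k (n + 1) (by omega)
      simp only [Nat.add_sub_cancel] at hstep
      rw [hstep, ih, show n + 1 - N = (n - N) + 1 by omega, Nat.mul_succ]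
      omega
  constructor
  · refine ⟨Polynomial.C ((A : ℚ)) * Polynomial.X
      + Polynomial.C ((omegaE {x : Fin 3 → ℕ | ∃ i ≤ k, x = ![k - i, i * k, i]} N : ℚ)
        - (A : ℚ) * (N : ℚ)), ?_, ?_⟩
    · exact Polynomial.natDegree_linear (by exact_mod_cast hApos.ne')
    · filter_upwards [Filter.eventually_ge_atTop N] with s hs
      rw [hval s hs, Nat.cast_add, Nat.cast_mul, Nat.cast_sub hs]
      simp only [Polynomial.eval_add, Polynomial.eval_mul, Polynomial.eval_C, Polynomial.eval_X]
      ring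
  · filter_upwards [Filter.eventually_ge_atTop (N + 1)] with s hs
    refine ⟨?_, ?_, ?_⟩
    · rw [OmegaAux3.step k s hs, OmegaAux3.omega2_eq k s (by omega),
        OmegaAux3.omega3_eq k s (by omega)]
    · rw [OmegaAux3.omega2_eq k s (by omega)]; exact h2T2
    · rw [OmegaAux3.omega3_eq k s (by omega)]; exact h2T3
end

section
/- Let E₃ = {(k−i, ik) : i = 0, 1, ..., k} ⊆ ℕ² with k ≥ 1. Then for all sufficiently large s, ω_{E₃}(s) = k²(k+1)/2. -/
open Filter Finset Polynomial

/-!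
A point of ℕ² lies above no element of `E₃` exactly when it lies in the staircase
`{(a, b) : a < k, b < (k - a) k}`. This region is finite and all its points have order
below `k + k²`, so from then on `ω_{E₃}(s)` is its area `k · ∑_{a<k} (k - a) = k²(k+1)/2`.
-/

theorem omegaE_eq_ncard_of_sum_le {m : ℕ} (E : Set (Fin m → ℕ)) (s : ℕ)
    (h : ∀ x : Fin m → ℕ, (∀ e ∈ E, ¬ e ≤ x) → ∑ i, x i ≤ s) :
    omegaE E s = {x : Fin m → ℕ | ∀ e ∈ E, ¬ e ≤ x}.ncard := by
  unfold omegaE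
  congr 1
  ext x
  exact ⟨And.right, fun hx => ⟨h x hx, hx⟩⟩

theorem ncard_setOf_fst_lt_snd_lt (n : ℕ) (f : ℕ → ℕ) :
    {p : ℕ × ℕ | p.1 < n ∧ p.2 < f p.1}.ncard = ∑ a ∈ range n, f a := by
  have hset : {p : ℕ × ℕ | p.1 < n ∧ p.2 < f p.1} =
      ↑(((range n).sigma fun a => range (f a)).map (Equiv.sigmaEquivProd ℕ ℕ).toEmbedding) := by
    ext ⟨a, b⟩
    simp
  rw [hset, Set.ncard_coe_finset, card_map, card_sigma]
  simp only [card_range]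

theorem two_mul_sum_range_sub (k : ℕ) : 2 * ∑ a ∈ range k, (k - a) = k * (k + 1) := by
  have hreflect : ∑ a ∈ range k, (k - a) = ∑ a ∈ range (k + 1), a := by
    rw [sum_range_succ', ← sum_range_reflect]
    exact sum_congr rfl fun a ha => by rw [mem_range] at ha; omega
  rw [hreflect, mul_comm, sum_range_id_mul_two, Nat.add_sub_cancel, mul_comm]

def staircase (k : ℕ) : Set (Fin 2 → ℕ) := {x | ∃ i ≤ k, x = ![k - i, i * k]}

theorem forall_not_staircase_le_iff (k : ℕ) (x : Fin 2 → ℕ) :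
    (∀ e ∈ staircase k, ¬ e ≤ x) ↔ x 0 < k ∧ x 1 < (k - x 0) * k := by
  simp only [staircase, Set.mem_ofPred_eq, forall_exists_index, and_imp, Pi.le_def,
    Fin.forall_fin_two]
  constructor
  · intro h
    have hx0 : x 0 < k := by
      by_contra! hk
      exact h _ 0 (Nat.zero_le k) rfl ⟨by simpa using hk, by simp⟩
    refine ⟨hx0, ?_⟩
    by_contra! hx1
    exact h _ (k - x 0) (Nat.sub_le k _) rfl ⟨by simp only [Matrix.cons_val_zero]; omega, by simpa using hx1⟩
  · rintro ⟨hx0, hx1⟩ e i hi rfl ⟨he0, he1⟩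
    simp only [Matrix.cons_val_zero, Matrix.cons_val_one] at he0 he1
    have : (k - x 0) * k ≤ i * k := Nat.mul_le_mul_right _ (by omega)
    omega

theorem ncard_forall_not_staircase_le (k : ℕ) :
    {x : Fin 2 → ℕ | ∀ e ∈ staircase k, ¬ e ≤ x}.ncard = ∑ a ∈ range k, (k - a) * k := by
  have hpre : {x : Fin 2 → ℕ | ∀ e ∈ staircase k, ¬ e ≤ x} =
      finTwoArrowEquiv ℕ ⁻¹' {p : ℕ × ℕ | p.1 < k ∧ p.2 < (k - p.1) * k} := by
    ext x
    exact forall_not_staircase_le_iff k x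
  rw [hpre, Set.ncard_preimage_of_injective_subset_range (finTwoArrowEquiv ℕ).injective
    (by simp only [Equiv.range_eq_univ, Set.subset_univ])]
  exact ncard_setOf_fst_lt_snd_lt k fun a => (k - a) * k

theorem omegaE_staircase_general (k : ℕ) :
    ∀ᶠ s : ℕ in Filter.atTop,
      2 * omegaE {x : Fin 2 → ℕ | ∃ i ≤ k, x = ![k - i, i * k]} s = k ^ 2 * (k + 1) := by
  filter_upwards [eventually_ge_atTop (k + k * k)] with s hs
  have hbound : ∀ x : Fin 2 → ℕ, (∀ e ∈ staircase k, ¬ e ≤ x) → ∑ i, x i ≤ s := by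
    intro x hx
    obtain ⟨hx0, hx1⟩ := (forall_not_staircase_le_iff k x).1 hx
    have : (k - x 0) * k ≤ k * k := Nat.mul_le_mul_right _ (Nat.sub_le k _)
    rw [Fin.sum_univ_two]
    omega
  rw [← staircase, omegaE_eq_ncard_of_sum_le _ s hbound, ncard_forall_not_staircase_le,
    ← sum_mul, ← mul_assoc, two_mul_sum_range_sub]
  ring

/-- For E₃ = {(k-i, ik) : 0 ≤ i ≤ k} ⊆ ℕ² with k ≥ 1, eventually ω_{E₃}(s) = k²(k+1)/2. -/
theorem omegaE_staircase (k : ℕ) (hk : 1 ≤ k) :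
    ∀ᶠ s : ℕ in Filter.atTop,
      2 * omegaE {x : Fin 2 → ℕ | ∃ i ≤ k, x = ![k - i, i * k]} s = k ^ 2 * (k + 1) :=
  omegaE_staircase_general k
end

section
/- Let e ≥ 1 and suppose τ is an integer such that τ = C(s+3, 3) − C(s+3−e, 3) − w(s) for all sufficiently large s, where w is a numerical polynomial with w(s+e) ∈ W and deg w ≤ 2. Then τ ≤ e²(e+1)²/2. -/
open Filter Finset Polynomial

/-!
The monomials not above any element of `E` form a lower set in `ℕ^m`; if `h k` counts those
of degree `k`, then `ω_E(s) = ∑_{k ≤ s} h k`. The shadow of the degree-`(k + 1)` part lies in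
degree `k`, so a Macaulay-type bound (proved by slicing along the last variable) gives
`shadowLB k (h (k + 1)) ≤ h k`. In large degree the hypotheses force `h` to agree with the
Hilbert function `extremal e` of the ideal `(z ^ (e + 1), y ^ (e ^ 2) z ^ e)`, whose own shadows
are as small as the bound allows; propagating downwards gives `extremal e ≤ h` in every degree. The partial
sums of `extremal e` are `C(s + e + 3, 3) - C(s + 3, 3) - e²(e + 1)² / 2`, those of `h` are the
same with `τ` in place of the constant.
-/

namespace CodimThreeBezout

/-- The number of degree-`d` monomials in three variables whose last exponent is `< u`
(truncated subtraction makes the terms with `t > d` vanish). -/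
def segCard (d u : ℕ) : ℕ := ∑ t ∈ range u, (d + 1 - t)

lemma segCard_succ (d u : ℕ) : segCard d (u + 1) = segCard d u + (d + 1 - u) :=
  sum_range_succ _ _

lemma segCard_mono (d : ℕ) : Monotone (segCard d) :=
  fun _ _ h => sum_le_sum_of_subset (range_subset_range.2 h)

lemma segCard_of_le {d u : ℕ} (h : d + 1 ≤ u) : segCard d u = segCard d (d + 1) := by
  induction u, h using Nat.le_induction with
  | base => rfl
  | succ u hu ih => rw [segCard_succ, ih]; omega

lemma segCard_le_top (d u : ℕ) : segCard d u ≤ segCard d (d + 1) := by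
  rcases le_total u (d + 1) with h | h
  · exact segCard_mono d h
  · rw [segCard_of_le h]

lemma le_segCard {d u : ℕ} (h : u ≤ d + 1) : u ≤ segCard d u := by
  induction u with
  | zero => exact le_rfl
  | succ u ih => rw [segCard_succ]; have := ih (by omega); omega

lemma segCard_succ_left {d u : ℕ} (h : u ≤ d + 2) : segCard (d + 1) u = segCard d u + u := by
  induction u with
  | zero => rfl
  | succ u ih => rw [segCard_succ, segCard_succ, ih (by omega)]; omega

lemma segCard_succ_top (d : ℕ) : segCard (d + 1) (d + 2) = segCard d (d + 1) + (d + 2) := by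
  rw [segCard_succ_left le_rfl, segCard_of_le (Nat.le_succ _)]

lemma segCard_add_le {d a j : ℕ} (ha : 1 ≤ a) :
    segCard (d + 1) (a + j) ≤ segCard (d + 1) a + segCard d j := by
  induction j with
  | zero => simp [segCard]
  | succ j ih => rw [← add_assoc, segCard_succ, segCard_succ]; omega

lemma segCard_cast {d u : ℕ} (h : u ≤ d + 1) :
    (segCard d u : ℚ) = u * (d + 1) - u * (u - 1) / 2 := by
  induction u with
  | zero => simp [segCard]
  | succ u ih =>
    rw [segCard_succ, Nat.cast_add, ih (by omega), Nat.cast_sub (by omega)]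
    push_cast
    ring

def segIndex (d N : ℕ) : ℕ := Nat.findGreatest (fun u => segCard d u ≤ N) (d + 1)

lemma segIndex_le (d N : ℕ) : segIndex d N ≤ d + 1 := Nat.findGreatest_le _

lemma segCard_segIndex_le (d N : ℕ) : segCard d (segIndex d N) ≤ N :=
  Nat.findGreatest_spec (P := fun u => segCard d u ≤ N) (Nat.zero_le _) (by simp [segCard])

lemma le_segIndex {d N u : ℕ} (h : segCard d u ≤ N) (hu : u ≤ d + 1) : u ≤ segIndex d N :=
  Nat.le_findGreatest hu h

lemma segIndex_succ_le (d N : ℕ) : segIndex d (N + 1) ≤ segIndex d N + 1 := by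
  set v := segIndex d (N + 1)
  obtain ⟨u, h0 | hu⟩ : ∃ u, v = 0 ∨ v = u + 1 := ⟨v - 1, by omega⟩
  · omega
  have hv : segCard d (u + 1) ≤ N + 1 := hu ▸ segCard_segIndex_le d (N + 1)
  have hvle : u + 1 ≤ d + 1 := hu ▸ segIndex_le d (N + 1)
  rw [segCard_succ] at hv
  have : u ≤ segIndex d N := le_segIndex (by omega) (by omega)
  omega

/-- Macaulay's lower bound for the size of the shadow of `N` monomials of degree `n + 1`: the
initial segment `{last exponent < u}` of size `segCard (n + 1) u` has a shadow of size
`segCard n u = segCard (n + 1) u - u`. -/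
def shadowLB (n N : ℕ) : ℕ := min (N - segIndex (n + 1) N) (segCard n (n + 1))

lemma shadowLB_zero (n : ℕ) : shadowLB n 0 = 0 := by simp [shadowLB]

lemma shadowLB_le_top (n N : ℕ) : shadowLB n N ≤ segCard n (n + 1) := min_le_right _ _

lemma shadowLB_mono (n : ℕ) : Monotone (shadowLB n) := by
  refine monotone_nat_of_le_succ fun N => ?_
  have h1 := segIndex_succ_le (n + 1) N
  have h2 : segIndex (n + 1) N ≤ N :=
    (le_segCard (segIndex_le _ _)).trans (segCard_segIndex_le _ _)
  unfold shadowLB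
  omega

lemma shadowLB_of_le {n N : ℕ} (hN : segCard (n + 1) (n + 2) ≤ N) :
    shadowLB n N = segCard n (n + 1) := by
  have hidx : segIndex (n + 1) N = n + 2 := le_antisymm (segIndex_le _ _) (le_segIndex hN le_rfl)
  have htop := segCard_succ_top n
  rw [shadowLB, hidx]
  omega

lemma shadowLB_le_of_witness {n N x u : ℕ} (hu : u ≤ n + 2) (hT : segCard (n + 1) u ≤ N)
    (hN : N ≤ x + u) : shadowLB n N ≤ x := by
  have := le_segIndex hT hu
  exact (min_le_left _ _).trans (by omega)

lemma exists_witness_shadowLB {n N : ℕ} (hN : N < segCard (n + 1) (n + 2)) :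
    ∃ u ≤ n + 2, segCard (n + 1) u ≤ N ∧ N ≤ shadowLB n N + u := by
  rcases le_total (N - segIndex (n + 1) N) (segCard n (n + 1)) with h | h
  · refine ⟨_, segIndex_le _ _, segCard_segIndex_le _ _, ?_⟩
    rw [shadowLB, min_eq_left h]
    omega
  · have htop := segCard_succ_top n
    refine ⟨N - segCard n (n + 1), by omega, ?_, ?_⟩
    · rw [segCard_succ_left (by omega)]
      have := segCard_le_top n (N - segCard n (n + 1))
      omega
    · rw [shadowLB, min_eq_right h]
      omega

lemma shadowLB_segCard_add {k u c : ℕ} (hc : c ≤ k + 1 - u) :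
    shadowLB k (segCard (k + 1) u + c) = segCard k u + c := by
  rcases le_or_gt u (k + 1) with hu | hu
  · have hidx : segIndex (k + 1) (segCard (k + 1) u + c) = u := by
      refine le_antisymm (not_lt.1 fun hlt => ?_) (le_segIndex le_self_add (by omega))
      have := (segCard_mono (k + 1) hlt).trans (segCard_segIndex_le _ _)
      rw [segCard_succ] at this
      omega
    have hsplit : segCard (k + 1) u = segCard k u + u := segCard_succ_left (by omega)
    have htop := segCard_le_top k (u + 1)
    rw [segCard_succ] at htop
    rw [shadowLB, hidx]
    omega
  · rw [Nat.sub_eq_zero_of_le hu.le, Nat.le_zero] at hc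
    rw [hc, add_zero, add_zero, segCard_of_le (by omega : k + 1 + 1 ≤ u), segCard_of_le hu.le]
    exact shadowLB_of_le le_rfl

lemma shadowLB_add_le_max {n M R b : ℕ} (hb : b ≤ n + 2) (hR : segCard (n + 1) b ≤ R) :
    shadowLB (n + 1) (M + R) ≤ max R (M + (R - b)) := by
  refine shadowLB_le_of_witness (u := min M b) (by omega) ?_ (by omega)
  rw [segCard_succ_left (by omega)]
  have := segCard_mono (n + 1) (min_le_right M b)
  omega

lemma shadowLB_add_le {n M R a b : ℕ} (ha : 1 ≤ a) (ha' : a ≤ n + 3) (hb : b ≤ n + 2)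
    (hM : segCard (n + 2) a ≤ M) (hR : segCard (n + 1) b ≤ R) :
    shadowLB (n + 1) (M + R) ≤ (M - a) + (R - b) := by
  have haM := (le_segCard ha').trans hM
  have hbR := (le_segCard hb).trans hR
  have hMa : segCard (n + 2) a = segCard (n + 1) a + a := segCard_succ_left ha'
  have hRb : segCard (n + 1) b = segCard n b + b := segCard_succ_left hb
  rcases le_total (a + b) (n + 3) with hab | hab
  · have : segCard (n + 2) (a + b) ≤ segCard (n + 2) a + segCard (n + 1) b :=
      segCard_add_le ha
    refine shadowLB_le_of_witness hab ?_ (by omega)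
    change segCard (n + 2) (a + b) ≤ M + R
    omega
  · have hcap : segCard (n + 1) (a + b) = segCard (n + 1) (n + 2) := segCard_of_le (by omega)
    have := segCard_add_le (d := n) (j := b) ha
    have : shadowLB (n + 1) (M + R) ≤ segCard (n + 1) (n + 2) := shadowLB_le_top _ _
    omega

lemma shadowLB_add_le_max_add (n M R : ℕ) :
    shadowLB (n + 1) (M + R) ≤ max R (shadowLB (n + 1) M + shadowLB n R) := by
  rcases le_or_gt (segCard (n + 1) (n + 2)) R with hR | hR
  · exact le_max_of_le_left ((shadowLB_le_top _ _).trans hR)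
  obtain ⟨b, hb, hbR, hRb⟩ := exists_witness_shadowLB hR
  rcases le_or_gt (segCard (n + 2) (n + 3)) M with hM | hM
  · have hMtop : shadowLB (n + 1) M = segCard (n + 1) (n + 2) := shadowLB_of_le hM
    have : shadowLB (n + 1) (M + R) ≤ segCard (n + 1) (n + 2) := shadowLB_le_top _ _
    omega
  obtain ⟨a, ha, haM, hMa⟩ := exists_witness_shadowLB hM
  rcases Nat.eq_zero_or_pos a with rfl | ha0
  · exact (shadowLB_add_le_max hb hbR).trans (max_le_max le_rfl (by omega))
  · exact le_max_of_le_right ((shadowLB_add_le ha0 ha hb haM hbR).trans (by omega))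

lemma shadowLB_sum_range_le (n : ℕ) (f : ℕ → ℕ) (hf : f (n + 1) ≤ 1) :
    shadowLB n (∑ t ∈ range (n + 2), f t) ≤
      ∑ t ∈ range (n + 1), max (shadowLB (n - t) (f t)) (f (t + 1)) := by
  induction n generalizing f with
  | zero =>
    have : shadowLB 0 (f 0 + f 1) ≤ 1 := shadowLB_le_top 0 _
    simp only [sum_range_succ, sum_range_zero, zero_add, Nat.sub_zero]
    interval_cases h : f 1
    · simp
    · exact le_max_of_le_right this
  | succ n ih =>
    set S := ∑ t ∈ range (n + 1), max (shadowLB (n - t) (f (t + 1))) (f (t + 1 + 1))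
    have hS : shadowLB n (∑ t ∈ range (n + 2), f (t + 1)) ≤ S := ih (fun t => f (t + 1)) hf
    have hR : ∑ t ∈ range (n + 2), f (t + 1) ≤ S + f 1 := by
      have : ∑ t ∈ range (n + 1), f (t + 1 + 1) ≤ S := sum_le_sum fun t _ => le_max_right _ _
      rw [sum_range_succ', zero_add]
      omega
    have hsub := shadowLB_add_le_max_add n (f 0) (∑ t ∈ range (n + 2), f (t + 1))
    have hL : ∑ t ∈ range (n + 1 + 2), f t = f 0 + ∑ t ∈ range (n + 2), f (t + 1) := by
      rw [sum_range_succ', add_comm]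
    have hRHS : ∑ t ∈ range (n + 1 + 1), max (shadowLB (n + 1 - t) (f t)) (f (t + 1)) =
        S + max (shadowLB (n + 1) (f 0)) (f 1) := by
      rw [sum_range_succ']
      simp only [S, Nat.add_sub_add_right, Nat.sub_zero]
    rw [hL, hRHS]
    omega

section Shadow

variable {m : ℕ}

def deg (x : Fin m → ℕ) : ℕ := ∑ i, x i

lemma le_deg (x : Fin m → ℕ) (i : Fin m) : x i ≤ deg x :=
  single_le_sum (fun j _ => Nat.zero_le (x j)) (mem_univ i)

lemma deg_add_single (y : Fin m → ℕ) (i : Fin m) : deg (y + Pi.single i 1) = deg y + 1 := by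
  simp [deg, sum_add_distrib]

lemma deg_snoc (y : Fin m → ℕ) (t : ℕ) : deg (Fin.snoc y t : Fin (m + 1) → ℕ) = deg y + t := by
  simp [deg, Fin.sum_univ_castSucc]

lemma eq_zero_of_deg_eq_zero {y : Fin m → ℕ} (h : deg y = 0) : y = 0 :=
  funext fun i => Nat.eq_zero_of_le_zero (h ▸ le_deg y i)

def shadow (A : Finset (Fin m → ℕ)) : Finset (Fin m → ℕ) :=
  {y ∈ A.biUnion fun x => univ.image fun i => x - Pi.single i 1 |
    ∃ i, y + Pi.single i 1 ∈ A}

lemma mem_shadow {A : Finset (Fin m → ℕ)} {y : Fin m → ℕ} :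
    y ∈ shadow A ↔ ∃ i, y + Pi.single i 1 ∈ A := by
  refine ⟨fun h => (mem_filter.1 h).2, fun ⟨i, hi⟩ => mem_filter.2 ⟨?_, i, hi⟩⟩
  exact mem_biUnion.2 ⟨_, hi, mem_image.2 ⟨i, mem_univ _, add_tsub_cancel_right _ _⟩⟩

lemma deg_of_mem_shadow {A : Finset (Fin m → ℕ)} {n : ℕ} (hA : ∀ x ∈ A, deg x = n + 1)
    {y : Fin m → ℕ} (hy : y ∈ shadow A) : deg y = n := by
  obtain ⟨i, hi⟩ := mem_shadow.1 hy
  have := hA _ hi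
  rw [deg_add_single] at this
  omega

def slice (A : Finset (Fin (m + 1) → ℕ)) (t : ℕ) : Finset (Fin m → ℕ) :=
  {x ∈ A | x (Fin.last m) = t}.image Fin.init

lemma mem_slice {A : Finset (Fin (m + 1) → ℕ)} {t : ℕ} {y : Fin m → ℕ} :
    y ∈ slice A t ↔ (Fin.snoc y t : Fin (m + 1) → ℕ) ∈ A := by
  simp only [slice, mem_image, mem_filter]
  constructor
  · rintro ⟨x, ⟨hx, rfl⟩, rfl⟩
    rwa [Fin.snoc_init_self]
  · intro h
    exact ⟨_, ⟨h, Fin.snoc_last _ _⟩, Fin.init_snoc _ _⟩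

lemma card_eq_sum_card_slice (A : Finset (Fin (m + 1) → ℕ)) {n : ℕ}
    (hA : ∀ x ∈ A, x (Fin.last m) < n) : #A = ∑ t ∈ range n, #(slice A t) := by
  rw [card_eq_sum_card_fiberwise fun x hx => mem_range.2 (hA x hx)]
  refine sum_congr rfl fun t _ => (card_image_of_injOn fun x hx y hy hxy => ?_).symm
  rw [← Fin.snoc_init_self x, ← Fin.snoc_init_self y, hxy, (mem_filter.1 hx).2,
    (mem_filter.1 hy).2]

lemma shadow_slice_subset (A : Finset (Fin (m + 1) → ℕ)) (t : ℕ) :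
    shadow (slice A t) ⊆ slice (shadow A) t := by
  intro y hy
  obtain ⟨j, hj⟩ := mem_shadow.1 hy
  refine mem_slice.2 (mem_shadow.2 ⟨j.castSucc, ?_⟩)
  convert mem_slice.1 hj using 1
  ext i
  cases i using Fin.lastCases <;> simp [Pi.single_apply, Fin.snoc_castSucc]

lemma slice_succ_subset (A : Finset (Fin (m + 1) → ℕ)) (t : ℕ) :
    slice A (t + 1) ⊆ slice (shadow A) t := by
  intro y hy
  refine mem_slice.2 (mem_shadow.2 ⟨Fin.last m, ?_⟩)
  convert mem_slice.1 hy using 1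
  ext i
  cases i using Fin.lastCases <;> simp [Fin.snoc_castSucc]

lemma deg_add_of_mem_slice {A : Finset (Fin (m + 1) → ℕ)} {d : ℕ} (hA : ∀ x ∈ A, deg x = d)
    {t : ℕ} {y : Fin m → ℕ} (hy : y ∈ slice A t) : deg y + t = d := by
  rw [← deg_snoc]
  exact hA _ (mem_slice.1 hy)

lemma card_slice_top_le_one {A : Finset (Fin (m + 1) → ℕ)} {d : ℕ} (hA : ∀ x ∈ A, deg x = d) :
    #(slice A d) ≤ 1 :=
  card_le_one.2 fun y hy z hz => by
    have hy0 := deg_add_of_mem_slice hA hy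
    have hz0 := deg_add_of_mem_slice hA hz
    rw [eq_zero_of_deg_eq_zero (by omega : deg y = 0),
      eq_zero_of_deg_eq_zero (by omega : deg z = 0)]

theorem shadowLB_card_le_card_shadow {m n : ℕ} {A : Finset (Fin m → ℕ)}
    (hA : ∀ x ∈ A, deg x = n + 1) : shadowLB n #A ≤ #(shadow A) := by
  induction m generalizing n with
  | zero =>
    have : A = ∅ := eq_empty_of_forall_notMem fun x hx => by simpa [deg] using hA x hx
    simp [this, shadowLB_zero]
  | succ m ih =>
    have hA_card : #A = ∑ t ∈ range (n + 2), #(slice A t) :=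
      card_eq_sum_card_slice A fun x hx => by
        have := le_deg x (Fin.last m); have := hA x hx; omega
    have hshadow_card : #(shadow A) = ∑ t ∈ range (n + 1), #(slice (shadow A) t) :=
      card_eq_sum_card_slice _ fun y hy => by
        have := le_deg y (Fin.last m); have := deg_of_mem_shadow hA hy; omega
    have hslice : ∀ t ∈ range (n + 1),
        max (shadowLB (n - t) #(slice A t)) #(slice A (t + 1)) ≤ #(slice (shadow A) t) := by
      intro t ht
      have ht := mem_range.1 ht
      refine max_le ?_ (card_le_card (slice_succ_subset A t))
      refine (ih fun y hy => ?_).trans (card_le_card (shadow_slice_subset A t))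
      have := deg_add_of_mem_slice hA hy
      omega
    calc shadowLB n #A
        ≤ ∑ t ∈ range (n + 1), max (shadowLB (n - t) #(slice A t)) #(slice A (t + 1)) := by
          rw [hA_card]
          exact shadowLB_sum_range_le n _ (card_slice_top_le_one hA)
      _ ≤ #(shadow A) := hshadow_card ▸ sum_le_sum hslice

end Shadow

section LowerSet

variable {m : ℕ}

lemma finite_level (E : Set (Fin m → ℕ)) (k : ℕ) :
    {x : Fin m → ℕ | deg x = k ∧ ∀ e ∈ E, ¬ e ≤ x}.Finite :=
  (Set.finite_Iic fun _ => k).subset fun x hx i => hx.1 ▸ le_deg x i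

noncomputable def level (E : Set (Fin m → ℕ)) (k : ℕ) : Finset (Fin m → ℕ) :=
  (finite_level E k).toFinset

lemma mem_level {E : Set (Fin m → ℕ)} {k : ℕ} {x : Fin m → ℕ} :
    x ∈ level E k ↔ deg x = k ∧ ∀ e ∈ E, ¬ e ≤ x :=
  Set.Finite.mem_toFinset _

lemma shadow_level_subset (E : Set (Fin m → ℕ)) (k : ℕ) :
    shadow (level E (k + 1)) ⊆ level E k := by
  intro y hy
  obtain ⟨i, hi⟩ := mem_shadow.1 hy
  obtain ⟨hdeg, hE⟩ := mem_level.1 hi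
  rw [deg_add_single] at hdeg
  exact mem_level.2 ⟨by omega, fun e he hle => hE e he (hle.trans le_self_add)⟩

lemma shadowLB_card_level_le (E : Set (Fin m → ℕ)) (k : ℕ) :
    shadowLB k #(level E (k + 1)) ≤ #(level E k) :=
  (shadowLB_card_le_card_shadow fun _ hx => (mem_level.1 hx).1).trans
    (card_le_card (shadow_level_subset E k))

lemma omegaE_eq_sum_card_level (E : Set (Fin m → ℕ)) (s : ℕ) :
    omegaE E s = ∑ k ∈ range (s + 1), #(level E k) := by
  have hset : {x : Fin m → ℕ | (∑ i, x i) ≤ s ∧ ∀ e ∈ E, ¬ e ≤ x} =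
      ↑((range (s + 1)).biUnion (level E)) := by
    ext x
    simp only [Set.mem_ofPred_eq, coe_biUnion, coe_range, Set.mem_Iio, Set.mem_iUnion, mem_coe,
      mem_level, deg, exists_prop]
    constructor
    · rintro ⟨hs, hE⟩
      exact ⟨_, Nat.lt_succ_of_le hs, rfl, hE⟩
    · rintro ⟨k, hk, rfl, hE⟩
      exact ⟨Nat.le_of_lt_succ hk, hE⟩
  rw [omegaE, hset, Set.ncard_coe_finset, card_biUnion]
  intro k _ l _ hkl
  exact disjoint_left.2 fun x hk hl => hkl ((mem_level.1 hk).1.symm.trans (mem_level.1 hl).1)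

end LowerSet

/-- The Hilbert function of the complement of the monomial ideal
`(z ^ (e + 1), y ^ (e ^ 2) * z ^ e)` in three variables: all monomials with `z`-exponent `< e`,
and the monomials `x^a y^b z^e` with `b < e ^ 2`. -/
def extremal (e k : ℕ) : ℕ := min (segCard k (e + 1)) (segCard k e + e ^ 2)

lemma extremal_eq_segCard_add_min (e k : ℕ) :
    extremal e k = segCard k e + min (k + 1 - e) (e ^ 2) := by
  rw [extremal, segCard_succ, min_add_add_left]

lemma extremal_le_shadowLB (e k : ℕ) : extremal e k ≤ shadowLB k (extremal e (k + 1)) := by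
  rw [extremal_eq_segCard_add_min e (k + 1)]
  rcases le_or_gt (e ^ 2) (k + 1 - e) with h | h
  · rw [min_eq_right (by omega), shadowLB_segCard_add h]
    exact min_le_right _ _
  · rw [min_eq_left (by omega), ← segCard_succ, ← add_zero (segCard (k + 1) (e + 1)),
      shadowLB_segCard_add (Nat.zero_le _), add_zero]
    exact min_le_left _ _

lemma extremal_le_card_level {m : ℕ} {E : Set (Fin m → ℕ)} {e K k : ℕ}
    (hK : extremal e K ≤ #(level E K)) (hk : k ≤ K) : extremal e k ≤ #(level E k) := by
  refine Nat.decreasingInduction (motive := fun k _ => extremal e k ≤ #(level E k))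
    (fun k _ ih => ?_) hK hk
  calc extremal e k ≤ shadowLB k (extremal e (k + 1)) := extremal_le_shadowLB e k
    _ ≤ shadowLB k #(level E (k + 1)) := shadowLB_mono k ih
    _ ≤ #(level E k) := shadowLB_card_level_le E k

lemma extremal_cast_of_lt {e k : ℕ} (hk : k < e) :
    (extremal e k : ℚ) = (k + 1) * (k + 2) / 2 := by
  rw [extremal_eq_segCard_add_min, Nat.sub_eq_zero_of_le hk, Nat.zero_min, add_zero,
    segCard_of_le hk, segCard_cast le_rfl]
  push_cast
  ring

lemma extremal_cast_of_le_of_lt {e k : ℕ} (he : e ≤ k) (hk : k < e ^ 2 + e) :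
    (extremal e k : ℚ) = e * (k + 1) - e * (e - 1) / 2 + (k + 1 - e) := by
  rw [extremal_eq_segCard_add_min, min_eq_left (by omega), Nat.cast_add, segCard_cast (by omega),
    Nat.cast_sub (by omega)]
  push_cast
  ring

lemma extremal_cast_of_le {e k : ℕ} (hk : e ^ 2 + e ≤ k) :
    (extremal e k : ℚ) = e * (k + 1) - e * (e - 1) / 2 + e ^ 2 := by
  rw [extremal_eq_segCard_add_min, min_eq_right (by omega), Nat.cast_add, segCard_cast (by omega)]
  push_cast
  ring

lemma qchoose_three (x : ℚ) : qchoose x 3 = x * (x - 1) * (x - 2) / 6 := by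
  simp [qchoose, prod_range_succ, Nat.factorial]

lemma sum_Ico_eq_sub_of_forall_eq {f g : ℕ → ℚ} {a b : ℕ} (hab : a ≤ b)
    (h : ∀ k ∈ Ico a b, g k = f (k + 1) - f k) : ∑ k ∈ Ico a b, g k = f b - f a :=
  (sum_congr rfl h).trans (sum_Ico_sub f hab)

lemma sum_range_extremal {e s : ℕ} (hs : e ^ 2 + e ≤ s + 1) :
    ∑ k ∈ range (s + 1), (extremal e k : ℚ) =
      qchoose (s + e + 3) 3 - qchoose (s + 3) 3 - e ^ 2 * (e + 1) ^ 2 / 2 := by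
  have hlow : ∑ k ∈ Ico 0 e, (extremal e k : ℚ) = e * (e + 1) * (e + 2) / 6 := by
    rw [sum_Ico_eq_sub_of_forall_eq (f := fun k : ℕ => (k : ℚ) * (k + 1) * (k + 2) / 6)
      (Nat.zero_le e) fun k hk => by rw [extremal_cast_of_lt (mem_Ico.1 hk).2]; push_cast; ring]
    simp
  have hmid : ∑ k ∈ Ico e (e ^ 2 + e), (extremal e k : ℚ) =
      (e + 1) * e ^ 2 * (e ^ 2 + e + 1) / 2 := by
    rw [sum_Ico_eq_sub_of_forall_eq (f := fun k : ℕ => (e + 1) * (k : ℚ) * (k + 1) / 2 -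
        e * (e + 1) * k / 2) (Nat.le_add_left e (e ^ 2)) fun k hk => by
      rw [extremal_cast_of_le_of_lt (mem_Ico.1 hk).1 (mem_Ico.1 hk).2]; push_cast; ring]
    push_cast
    ring
  have hhigh : ∑ k ∈ Ico (e ^ 2 + e) (s + 1), (extremal e k : ℚ) =
      (s + 1 - (e ^ 2 + e)) * (e * (s + 2 + e ^ 2 + e) / 2 - e * (e - 1) / 2 + e ^ 2) := by
    rw [sum_Ico_eq_sub_of_forall_eq (f := fun k : ℕ => e * (k : ℚ) * (k + 1) / 2 -
        e * (e - 1) * k / 2 + e ^ 2 * k) hs fun k hk => by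
      rw [extremal_cast_of_le (mem_Ico.1 hk).1]; push_cast; ring]
    push_cast
    ring
  rw [range_eq_Ico, ← sum_Ico_consecutive _ (Nat.zero_le (e ^ 2 + e)) hs,
    ← sum_Ico_consecutive _ (Nat.zero_le e) (Nat.le_add_left e (e ^ 2)), hlow, hmid, hhigh,
    qchoose_three, qchoose_three]
  ring

lemma eventually_omegaE_eq {m : ℕ} {E : Set (Fin m → ℕ)} {e : ℕ} {τ : ℤ} {w : ℚ[X]}
    (hE : ∀ᶠ s : ℕ in atTop, (omegaE E s : ℚ) = (w.comp (X + C (e : ℚ))).eval (s : ℚ))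
    (hid : ∀ᶠ s : ℕ in atTop,
      (τ : ℚ) = qchoose ((s : ℚ) + 3) 3 - qchoose ((s : ℚ) + 3 - (e : ℚ)) 3 - w.eval (s : ℚ)) :
    ∀ᶠ s : ℕ in atTop, (omegaE E s : ℚ) = qchoose (s + e + 3) 3 - qchoose (s + 3) 3 - τ := by
  filter_upwards [hE, (tendsto_add_atTop_nat e).eventually hid] with s hs hτ
  rw [Nat.cast_add, show (s : ℚ) + e + 3 - e = s + 3 by ring] at hτ
  rw [hs, eval_comp, eval_add, eval_X, eval_C, hτ]
  ring

end CodimThreeBezout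

open CodimThreeBezout

theorem codim_three_bound_general (e : ℕ) (τ : ℤ) (w : Polynomial ℚ)
    (hW : IsKolchin (w.comp (Polynomial.X + Polynomial.C (e : ℚ))))
    (hid : ∀ᶠ s : ℕ in Filter.atTop,
      (τ : ℚ) = qchoose ((s : ℚ) + 3) 3 - qchoose ((s : ℚ) + 3 - (e : ℚ)) 3
        - w.eval (s : ℚ)) :
    2 * (τ : ℚ) ≤ (e : ℚ) ^ 2 * ((e : ℚ) + 1) ^ 2 := by
  obtain ⟨m, E, hE⟩ := hW
  obtain ⟨N, hN⟩ := eventually_atTop.1 (eventually_omegaE_eq hE hid)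
  set K := N + e ^ 2 + e
  have hsum : ∀ s ≥ K, ∑ k ∈ range (s + 1), (#(level E k) : ℚ) =
      ∑ k ∈ range (s + 1), (extremal e k : ℚ) + (e ^ 2 * (e + 1) ^ 2 / 2 - τ) := fun s hs => by
    rw [sum_range_extremal (by omega), ← Nat.cast_sum, ← omegaE_eq_sum_card_level,
      hN s (by omega)]
    ring
  -- Both partial sums are eventually the same cubic up to a constant, so their increments agree.
  have htop : extremal e (K + 1) = #(level E (K + 1)) := by
    have h₁ := hsum (K + 1) (by omega)
    rw [sum_range_succ _ (K + 1), sum_range_succ _ (K + 1), hsum K le_rfl] at h₁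
    exact_mod_cast (by linarith : (extremal e (K + 1) : ℚ) = #(level E (K + 1)))
  have hle : ∑ k ∈ range (K + 2), (extremal e k : ℚ) ≤ ∑ k ∈ range (K + 2), (#(level E k) : ℚ) :=
    sum_le_sum fun k hk => by
      exact_mod_cast extremal_le_card_level htop.le (Nat.lt_succ_iff.1 (mem_range.1 hk))
  rw [hsum (K + 1) (by omega)] at hle
  linarith

/-- Codimension-3 Bézout bound: if τ = C(s+3,3) - C(s+3-e,3) - w(s) eventually, where w is a
numerical polynomial of degree ≤ 2 with w(s+e) ∈ W, then τ ≤ e²(e+1)²/2. -/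
theorem codim_three_bound (e : ℕ) (he : 1 ≤ e) (τ : ℤ) (w : Polynomial ℚ)
    (hdeg : w.natDegree ≤ 2)
    (hW : IsKolchin (w.comp (Polynomial.X + Polynomial.C (e : ℚ))))
    (hid : ∀ᶠ s : ℕ in Filter.atTop,
      (τ : ℚ) = qchoose ((s : ℚ) + 3) 3 - qchoose ((s : ℚ) + 3 - (e : ℚ)) 3
        - w.eval (s : ℚ)) :
    2 * (τ : ℚ) ≤ (e : ℚ) ^ 2 * ((e : ℚ) + 1) ^ 2 :=
  codim_three_bound_general e τ w hW hid
end

section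
/- Define a sequence c_{τ−1}, c_{τ−2}, ..., c₀ of non-negative reals by c_{τ−1} = e and the recursion c_{i−1} = C(τ−i+e, τ−i+1) + Σ_{j=2}^{τ+1−i} C(j − c_{i+j−2}, j) interpreted with the polynomial binomial coefficient, for 1 ≤ i ≤ τ−1, where e ≥ 2 and τ ≥ 2. Then there exists a constant K (depending only on τ) such that |c_i| ≤ K · e^{2^{(τ−1)−i}} for all 0 ≤ i ≤ τ−1. -/
open Filter Finset

/-- The binomial coefficient polynomial C(x, k) = x(x-1)...(x-k+1)/k! over ℝ. -/
noncomputable def rchoose (x : ℝ) (k : ℕ) : ℝ :=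
  (∏ i ∈ Finset.range k, (x - i)) / (Nat.factorial k)

/-!
Reindex by the distance `n = τ - 1 - i` from the top, so that `b n = c (τ - 1 - n)` starts at
`b 0 = e`. Since `|C(x, k)| ≤ (|x| + k) ^ k`, a term `C(j - b (n + 2 - j), j)` is, by induction,
of order `(e ^ 2 ^ (n + 2 - j)) ^ j`, and `j * 2 ^ (n + 2 - j) ≤ 2 ^ (n + 1)` for `j ≥ 1`: every
term of the recursion for `b (n + 1)` is `O(e ^ 2 ^ (n + 1))`, with constants depending only on `n`.
-/

lemma abs_rchoose_le (x : ℝ) (k : ℕ) : |rchoose x k| ≤ (|x| + k) ^ k := by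
  have hfact : (1 : ℝ) ≤ k.factorial := by exact_mod_cast k.factorial_pos
  calc |rchoose x k| = |∏ i ∈ range k, (x - i)| / k.factorial := by
        rw [rchoose, abs_div, Nat.abs_cast]
    _ ≤ |∏ i ∈ range k, (x - i)| := div_le_self (abs_nonneg _) hfact
    _ = ∏ i ∈ range k, |x - i| := abs_prod _ _
    _ ≤ ∏ _i ∈ range k, (|x| + k) := by
        refine prod_le_prod (fun _ _ => abs_nonneg _) fun i hi => ?_
        have hik : (i : ℝ) ≤ k := by exact_mod_cast (mem_range.mp hi).le
        calc |x - i| ≤ |x| + |(i : ℝ)| := abs_sub _ _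
          _ ≤ |x| + k := by rw [Nat.abs_cast]; linarith
    _ = (|x| + k) ^ k := by rw [prod_const, card_range]

lemma abs_rchoose_add_le {a x K e : ℝ} {m : ℕ} (k : ℕ) (he : 1 ≤ e)
    (hx : |x| ≤ K * e ^ m) :
    |rchoose (a + x) k| ≤ (|a| + k + K) ^ k * e ^ (m * k) := by
  have hem : 1 ≤ e ^ m := one_le_pow₀ he
  have hbase : |a + x| + k ≤ (|a| + k + K) * e ^ m := by
    have : |a| + k ≤ (|a| + k) * e ^ m := le_mul_of_one_le_right (by positivity) hem
    linarith [abs_add_le a x]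
  calc |rchoose (a + x) k| ≤ (|a + x| + k) ^ k := abs_rchoose_le _ _
    _ ≤ ((|a| + k + K) * e ^ m) ^ k := pow_le_pow_left₀ (by positivity) hbase k
    _ = (|a| + k + K) ^ k * e ^ (m * k) := by rw [mul_pow, ← pow_mul]

lemma mul_two_pow_sub_le {j n : ℕ} (hj : 1 ≤ j) (hjn : j ≤ n) :
    j * 2 ^ (n - j) ≤ 2 ^ (n - 1) :=
  calc j * 2 ^ (n - j) ≤ 2 ^ (j - 1) * 2 ^ (n - j) :=
        Nat.mul_le_mul_right _ (by have := Nat.lt_two_pow_self (n := j - 1); omega)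
    _ = 2 ^ (n - 1) := by rw [← pow_add]; congr 1; omega

lemma abs_recursion_step_le {e K : ℝ} {b : ℕ → ℝ} {n : ℕ} (he : 1 ≤ e) (hK : 0 ≤ K)
    (hb : ∀ m ≤ n, |b m| ≤ K * e ^ 2 ^ m) :
    |rchoose ((n + 1 : ℕ) + e) (n + 2) + ∑ j ∈ Icc 2 (n + 2), rchoose (j - b (n + 2 - j)) j|
      ≤ ((2 * n + 4 : ℝ) ^ (n + 2) + (n + 1) * (2 * n + 4 + K) ^ (n + 2)) * e ^ 2 ^ (n + 1) := by
  have hexp : ∀ {j m : ℕ}, 1 ≤ j → j ≤ n + 2 → m ≤ 2 ^ (n + 2 - j) → m * j ≤ 2 ^ (n + 1) :=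
    fun hj hjn hm => (Nat.mul_le_mul_right _ hm).trans
      (by rw [mul_comm]; exact mul_two_pow_sub_le hj hjn)
  have hfirst :
      |rchoose ((n + 1 : ℕ) + e) (n + 2)| ≤ (2 * n + 4 : ℝ) ^ (n + 2) * e ^ 2 ^ (n + 1) := by
    have h := abs_rchoose_add_le (a := ((n + 1 : ℕ) : ℝ)) (x := e) (K := 1) (m := 1) (n + 2) he
      (by rw [abs_of_nonneg (by linarith)]; simp)
    refine h.trans (mul_le_mul (le_of_eq ?_) (pow_le_pow_right₀ he (hexp ?_ le_rfl ?_))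
      (by positivity) (by positivity))
    · rw [Nat.abs_cast]; push_cast; ring
    · omega
    · simp
  have hterm : ∀ j ∈ Icc 2 (n + 2),
      |rchoose (j - b (n + 2 - j)) j| ≤ (2 * n + 4 + K) ^ (n + 2) * e ^ 2 ^ (n + 1) := by
    intro j hj
    obtain ⟨hj2, hjn⟩ := mem_Icc.mp hj
    have hjr : (j : ℝ) ≤ n + 2 := by exact_mod_cast hjn
    have h := abs_rchoose_add_le (a := (j : ℝ)) (x := -b (n + 2 - j)) j he
      ((abs_neg _).trans_le (hb _ (by omega)))
    rw [← sub_eq_add_neg, Nat.abs_cast] at h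
    refine h.trans (mul_le_mul ?_ (pow_le_pow_right₀ he (hexp (by omega) hjn le_rfl))
      (by positivity) (by positivity))
    calc ((j : ℝ) + j + K) ^ j ≤ (2 * n + 4 + K) ^ j :=
          pow_le_pow_left₀ (by positivity) (by linarith) j
      _ ≤ (2 * n + 4 + K) ^ (n + 2) := pow_le_pow_right₀ (by linarith) hjn
  have hsum : |∑ j ∈ Icc 2 (n + 2), rchoose (j - b (n + 2 - j)) j|
      ≤ (n + 1) * ((2 * n + 4 + K) ^ (n + 2) * e ^ 2 ^ (n + 1)) :=
    calc _ ≤ ∑ j ∈ Icc 2 (n + 2), |rchoose (j - b (n + 2 - j)) j| := abs_sum_le_sum_abs _ _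
      _ ≤ ∑ _j ∈ Icc 2 (n + 2), (2 * n + 4 + K) ^ (n + 2) * e ^ 2 ^ (n + 1) :=
          sum_le_sum hterm
      _ = (n + 1) * ((2 * n + 4 + K) ^ (n + 2) * e ^ 2 ^ (n + 1)) := by
        rw [sum_const, Nat.card_Icc, nsmul_eq_mul, show n + 2 + 1 - 2 = n + 1 by omega]
        push_cast; ring
  linarith [abs_add_le (rchoose ((n + 1 : ℕ) + e) (n + 2))
    (∑ j ∈ Icc 2 (n + 2), rchoose (j - b (n + 2 - j)) j)]

theorem exists_abs_le_mul_pow_two_pow (N : ℕ) :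
    ∃ K : ℝ, 0 ≤ K ∧ ∀ e : ℝ, 1 ≤ e → ∀ b : ℕ → ℝ, b 0 = e →
      (∀ n < N, b (n + 1) = rchoose ((n + 1 : ℕ) + e) (n + 2)
        + ∑ j ∈ Icc 2 (n + 2), rchoose (j - b (n + 2 - j)) j) →
      ∀ n ≤ N, |b n| ≤ K * e ^ 2 ^ n := by
  induction N with
  | zero =>
    refine ⟨1, zero_le_one, fun e he b hb0 _ n hn => ?_⟩
    obtain rfl : n = 0 := by omega
    simp [hb0, abs_of_nonneg (zero_le_one.trans he)]
  | succ N ih =>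
    obtain ⟨K, hK, hbound⟩ := ih
    refine ⟨max K ((2 * N + 4 : ℝ) ^ (N + 2) + (N + 1) * (2 * N + 4 + K) ^ (N + 2)),
      hK.trans (le_max_left _ _), fun e he b hb0 hrec n hn => ?_⟩
    have hprev := hbound e he b hb0 fun m hm => hrec m (by omega)
    rcases Nat.lt_or_eq_of_le hn with hn | rfl
    · exact (hprev n (by omega)).trans
        (mul_le_mul_of_nonneg_right (le_max_left _ _) (by positivity))
    · rw [hrec N N.lt_succ_self]
      exact (abs_recursion_step_le he hK hprev).trans
        (mul_le_mul_of_nonneg_right (le_max_right _ _) (by positivity))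

theorem recursion_double_exponential_general (τ : ℕ) :
    ∃ K : ℝ, ∀ e : ℝ, 2 ≤ e → ∀ c : ℕ → ℝ,
      (∀ i ≤ τ - 1, 0 ≤ c i) →
      c (τ - 1) = e →
      (∀ i, 1 ≤ i → i ≤ τ - 1 →
        c (i - 1) = rchoose (((τ - i : ℕ) : ℝ) + e) (τ - i + 1)
          + ∑ j ∈ Finset.Icc 2 (τ + 1 - i), rchoose ((j : ℝ) - c (i + j - 2)) j) →
      ∀ i ≤ τ - 1, |c i| ≤ K * e ^ (2 ^ (τ - 1 - i)) := by
  obtain ⟨K, -, hK⟩ := exists_abs_le_mul_pow_two_pow (τ - 1)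
  refine ⟨K, fun e he c _ hc0 hrec i hi => ?_⟩
  have hreindexed : ∀ n < τ - 1, c (τ - 1 - (n + 1)) = rchoose ((n + 1 : ℕ) + e) (n + 2)
      + ∑ j ∈ Icc 2 (n + 2), rchoose (j - c (τ - 1 - (n + 2 - j))) j := by
    intro n hn
    have h := hrec (τ - 1 - n) (by omega) (by omega)
    rw [show τ - (τ - 1 - n) = n + 1 by omega, show τ + 1 - (τ - 1 - n) = n + 2 by omega,
      show τ - 1 - n - 1 = τ - 1 - (n + 1) by omega] at h
    rw [h]
    congr 1
    refine sum_congr rfl fun j hj => ?_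
    obtain ⟨hj2, hjn⟩ := mem_Icc.mp hj
    rw [show τ - 1 - n + j - 2 = τ - 1 - (n + 2 - j) by omega]
  have h := hK e (by linarith) (fun n => c (τ - 1 - n)) hc0 hreindexed (τ - 1 - i) (by omega)
  rwa [show τ - 1 - (τ - 1 - i) = i by omega] at h

/-- The recursion c_{i-1} = C(τ-i+e, τ-i+1) + Σ_{j=2}^{τ+1-i} C(j - c_{i+j-2}, j) with
c_{τ-1} = e satisfies |c_i| ≤ K e^{2^{(τ-1)-i}} for a constant K depending only on τ. -/
theorem recursion_double_exponential (τ : ℕ) (hτ : 2 ≤ τ) :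
    ∃ K : ℝ, ∀ e : ℝ, 2 ≤ e → ∀ c : ℕ → ℝ,
      (∀ i ≤ τ - 1, 0 ≤ c i) →
      c (τ - 1) = e →
      (∀ i, 1 ≤ i → i ≤ τ - 1 →
        c (i - 1) = rchoose (((τ - i : ℕ) : ℝ) + e) (τ - i + 1)
          + ∑ j ∈ Finset.Icc 2 (τ + 1 - i), rchoose ((j : ℝ) - c (i + j - 2)) j) →
      ∀ i ≤ τ - 1, |c i| ≤ K * e ^ (2 ^ (τ - 1 - i)) :=
  recursion_double_exponential_general τ
end

section
/- For any numerical polynomial ω(s) = Σ_{i=0}^d a_i C(s+i, i) of degree d ≥ 1 with integer standard coefficients, the polynomial v(s) = ω(s + a_d) − C(s+1+d+a_d, d+1) + C(s+d+1, d+1) has degree strictly less than d. -/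
/-!
Write `A = a_d`. As a polynomial in `s`, `ω(s + A)` has degree `d` with leading coefficient
`A / d!`. The two binomials `C(s + 1 + d + A, d + 1)` and `C(s + d + 1, d + 1)` share the
leading coefficient `1 / (d + 1)!`, and the coefficient of `s^d` in `C(s + c, d + 1)` is
`Σ_{j ≤ d} (c - j) / (d + 1)!`, which depends on `c` through `c / d!`. So their difference has
degree `≤ d` with top coefficient `A / d!`, exactly cancelling the leading term of `ω(s + A)`.
-/

open Filter Finset Polynomial

open scoped Nat

noncomputable def shiftedDescFactorial (c : ℚ) (k : ℕ) : ℚ[X] :=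
  ∏ j ∈ range k, (X + C (c - j))

lemma monic_shiftedDescFactorial (c : ℚ) (k : ℕ) : (shiftedDescFactorial c k).Monic :=
  monic_prod_of_monic _ _ fun _ _ => monic_X_add_C _

lemma natDegree_shiftedDescFactorial (c : ℚ) (k : ℕ) :
    (shiftedDescFactorial c k).natDegree = k := by
  rw [shiftedDescFactorial, natDegree_prod_of_monic _ _ fun _ _ => monic_X_add_C _]
  simp only [natDegree_X_add_C, sum_const, card_range, smul_eq_mul, mul_one]

lemma coeff_shiftedDescFactorial_self (c : ℚ) (k : ℕ) :
    (shiftedDescFactorial c k).coeff k = 1 := by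
  simpa [natDegree_shiftedDescFactorial] using (monic_shiftedDescFactorial c k).coeff_natDegree

lemma coeff_shiftedDescFactorial_succ_pred (c : ℚ) (k : ℕ) :
    (shiftedDescFactorial c (k + 1)).coeff k = ∑ j ∈ range (k + 1), (c - j) := by
  have hpos : 0 < (shiftedDescFactorial c (k + 1)).natDegree := by
    rw [natDegree_shiftedDescFactorial]; omega
  have hnext := nextCoeff_of_natDegree_pos hpos
  rw [natDegree_shiftedDescFactorial, Nat.add_sub_cancel, shiftedDescFactorial,
    Monic.nextCoeff_prod _ _ fun _ _ => monic_X_add_C _] at hnext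
  simp only [nextCoeff_X_add_C] at hnext
  exact hnext.symm

noncomputable def shiftedChoose (c : ℚ) (k : ℕ) : ℚ[X] :=
  C ((k ! : ℚ)⁻¹) * shiftedDescFactorial c k

lemma eval_shiftedChoose (c s : ℚ) (k : ℕ) :
    (shiftedChoose c k).eval s = qchoose (s + c) k := by
  simp only [shiftedChoose, shiftedDescFactorial, qchoose, eval_mul, eval_C, eval_prod, eval_add,
    eval_X, div_eq_inv_mul, add_sub_assoc]

lemma natDegree_shiftedChoose_le (c : ℚ) (k : ℕ) : (shiftedChoose c k).natDegree ≤ k :=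
  (natDegree_C_mul_le _ _).trans (natDegree_shiftedDescFactorial c k).le

lemma coeff_shiftedChoose (c : ℚ) (k n : ℕ) :
    (shiftedChoose c k).coeff n = (k ! : ℚ)⁻¹ * (shiftedDescFactorial c k).coeff n :=
  coeff_C_mul _

lemma natDegree_shiftedChoose_sub_le (c c' : ℚ) (k : ℕ) :
    (shiftedChoose c (k + 1) - shiftedChoose c' (k + 1)).natDegree ≤ k := by
  rw [natDegree_le_iff_coeff_eq_zero]
  intro n hn
  rw [coeff_sub, coeff_shiftedChoose, coeff_shiftedChoose]
  rcases (Nat.succ_le_of_lt hn).eq_or_lt with rfl | hlt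
  · rw [coeff_shiftedDescFactorial_self, coeff_shiftedDescFactorial_self, sub_self]
  · rw [coeff_eq_zero_of_natDegree_lt (p := shiftedDescFactorial c _),
      coeff_eq_zero_of_natDegree_lt (p := shiftedDescFactorial c' _)] <;>
    simp [natDegree_shiftedDescFactorial, hlt]

lemma coeff_shiftedChoose_sub (c c' : ℚ) (k : ℕ) :
    (shiftedChoose c (k + 1) - shiftedChoose c' (k + 1)).coeff k = (c - c') / k ! := by
  have hsum (x : ℚ) :
      ∑ j ∈ range (k + 1), (x - j) = (k + 1) * x - ∑ j ∈ range (k + 1), (j : ℚ) := by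
    simp [sum_sub_distrib]
  rw [coeff_sub, coeff_shiftedChoose, coeff_shiftedChoose, coeff_shiftedDescFactorial_succ_pred,
    coeff_shiftedDescFactorial_succ_pred, hsum, hsum, Nat.factorial_succ]
  push_cast
  field_simp
  ring

section SumShiftedChoose

variable {d : ℕ} (b c : Fin (d + 1) → ℚ)

lemma natDegree_sum_shiftedChoose_le :
    (∑ i : Fin (d + 1), C (b i) * shiftedChoose (c i) i).natDegree ≤ d :=
  natDegree_sum_le_of_forall_le _ _ fun i _ =>
    ((natDegree_C_mul_le _ _).trans (natDegree_shiftedChoose_le _ _)).trans (Fin.is_le i)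

lemma coeff_sum_shiftedChoose_top :
    (∑ i : Fin (d + 1), C (b i) * shiftedChoose (c i) i).coeff d = b (Fin.last d) / d ! := by
  have hlow (i : Fin d) :
      (C (b i.castSucc) * shiftedChoose (c i.castSucc) i.castSucc).coeff d = 0 :=
    coeff_eq_zero_of_natDegree_lt <|
      ((natDegree_C_mul_le _ _).trans (natDegree_shiftedChoose_le _ _)).trans_lt
        (Fin.castSucc_lt_last i)
  rw [finsetSum_coeff, Fin.sum_univ_castSucc, sum_eq_zero fun i _ => hlow i, zero_add]
  simp only [Fin.val_last, coeff_C_mul, coeff_shiftedChoose,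
    coeff_shiftedDescFactorial_self, mul_one, div_eq_mul_inv]

end SumShiftedChoose

theorem minimizing_step_degree_general (d : ℕ) (hd : 1 ≤ d) (a : Fin (d + 1) → ℤ) :
    ∃ p : Polynomial ℚ, p.natDegree < d ∧ ∀ s : ℚ,
      p.eval s
        = (∑ i : Fin (d + 1),
            (a i : ℚ) * qchoose (s + (a (Fin.last d) : ℚ) + (i : ℕ)) (i : ℕ))
          - qchoose (s + 1 + (d : ℚ) + (a (Fin.last d) : ℚ)) (d + 1)
          + qchoose (s + (d : ℚ) + 1) (d + 1) := by
  set A : ℚ := (a (Fin.last d) : ℚ)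
  set ω := ∑ i : Fin (d + 1), C (a i : ℚ) * shiftedChoose (A + i) i
  set δ := shiftedChoose (1 + d + A) (d + 1) - shiftedChoose (d + 1) (d + 1)
  refine ⟨ω - δ, ?_, fun s => ?_⟩
  · have hdeg : (ω - δ).natDegree ≤ d :=
      (natDegree_sub_le_of_le (natDegree_sum_shiftedChoose_le _ _)
        (natDegree_shiftedChoose_sub_le _ _ d)).trans (max_self d).le
    have htop : (ω - δ).coeff d = 0 := by
      rw [coeff_sub, coeff_sum_shiftedChoose_top, coeff_shiftedChoose_sub]
      ring
    have := natDegree_le_pred hdeg htop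
    omega
  · simp only [ω, δ, eval_sub, eval_finsetSum, eval_mul, eval_C, eval_shiftedChoose, ← add_assoc]
    ring_nf

/-- Well-definedness of minimizing coefficients: for ω(s) = Σ a_i C(s+i,i) of degree d ≥ 1,
the polynomial v(s) = ω(s + a_d) - C(s+1+d+a_d, d+1) + C(s+d+1, d+1) has degree < d. -/
theorem minimizing_step_degree (d : ℕ) (hd : 1 ≤ d) (a : Fin (d + 1) → ℤ)
    (ha : a (Fin.last d) ≠ 0) :
    ∃ p : Polynomial ℚ, p.natDegree < d ∧ ∀ s : ℚ,
      p.eval s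
        = (∑ i : Fin (d + 1),
            (a i : ℚ) * qchoose (s + (a (Fin.last d) : ℚ) + (i : ℕ)) (i : ℕ))
          - qchoose (s + 1 + (d : ℚ) + (a (Fin.last d) : ℚ)) (d + 1)
          + qchoose (s + (d : ℚ) + 1) (d + 1) :=
  minimizing_step_degree_general d hd a
end
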